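/- arXiv:1508.00403 — 9 statements merged into one kernel-verified Lean document; each statement's English description precedes it below -/
import Mathlib

section
/- For all integers d ≥ 3, t ≥ 1, and n ≥ 2t, the undirected de Bruijn graph B(d,n) admits a t-identifying code. -/
/-- The undirected de Bruijn graph `B(d,n)`: vertices are strings of length `n`
over the alphabet `{0, ..., d-1}`, and two distinct strings `x`, `y` are adjacent
iff `x_{i+1} = y_i` for all valid `i`, or `y_{i+1} = x_i` for all valid `i`. -/
def deBruijnGraph (d n : ℕ) : SimpleGraph (Fin n → Fin d) where
  Adj x y := x ≠ y ∧
    ((∀ i : Fin n, ∀ h : (i : ℕ) + 1 < n, x ⟨(i : ℕ) + 1, h⟩ = y i) ∨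
     (∀ i : Fin n, ∀ h : (i : ℕ) + 1 < n, y ⟨(i : ℕ) + 1, h⟩ = x i))
  symm := ⟨fun x y ⟨hxy, h⟩ => ⟨hxy.symm, h.symm⟩⟩
  loopless := ⟨fun x ⟨hxx, _⟩ => hxx rfl⟩

/-- The ball of radius `t` around a vertex `x`. -/
def ball {V : Type*} (G : SimpleGraph V) (t : ℕ) (x : V) : Set V :=
  {y | G.dist x y ≤ t}

/-- A set `S` of vertices is a `t`-identifying code if every ball of radius `t`
meets `S`, and distinct vertices have distinct identifying sets `B_t(x) ∩ S`. -/
def IsIdentifyingCode {V : Type*} (G : SimpleGraph V) (t : ℕ) (S : Set V) : Prop :=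
  (∀ x : V, (ball G t x ∩ S).Nonempty) ∧
  ∀ x y : V, x ≠ y → ball G t x ∩ S ≠ ball G t y ∩ S

lemma exists_third {d : ℕ} (hd : 3 ≤ d) (a b : Fin d) : ∃ e : Fin d, e ≠ a ∧ e ≠ b := by
  by_contra h
  push_neg at h
  have hsub : (Finset.univ : Finset (Fin d)) ⊆ {a, b} := by
    intro e _
    by_cases he : e = a
    · simp [he]
    · simp [h e he]
  have := Finset.card_le_card hsub
  have h2 : ({a, b} : Finset (Fin d)).card ≤ 2 :=
    le_trans (Finset.card_insert_le _ _) (by simp)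
  simp [Finset.card_univ] at this
  omega

lemma walk_window {d n : ℕ} {u z : Fin n → Fin d} (w : (deBruijnGraph d n).Walk u z) :
    ∃ a b : ℕ, a + b ≤ w.length ∧ ∀ (i j : ℕ) (hi : i < n) (hj : j < n),
      a ≤ i → i + b < n → j + a = i + b → z ⟨j, hj⟩ = u ⟨i, hi⟩ := by
  induction w with
  | nil =>
    refine ⟨0, 0, le_refl _, fun i j hi hj _ _ hij => ?_⟩
    have : j = i := by omega
    subst this; rfl
  | @cons u v z h w ih =>
    obtain ⟨a, b, hab, hw⟩ := ih
    rcases h.2 with hL | hR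
    · -- v i = u (i+1) : left shift
      refine ⟨a + 1, b, by simp [SimpleGraph.Walk.length_cons]; omega, ?_⟩
      intro i j hi hj hai hib hij
      have hi1 : i - 1 < n := by omega
      have := hw (i - 1) j hi1 hj (by omega) (by omega) (by omega)
      rw [this]
      have h2 := hL ⟨i - 1, hi1⟩ (by simpa using (by omega : i - 1 + 1 < n))
      have : (⟨i - 1 + 1, by omega⟩ : Fin n) = ⟨i, hi⟩ := by
        apply Fin.ext; simp; omega
      rw [← this]
      exact (h2).symm
    · -- v (i+1) = u i : right shift
      refine ⟨a, b + 1, by simp [SimpleGraph.Walk.length_cons]; omega, ?_⟩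
      intro i j hi hj hai hib hij
      have hi1 : i + 1 < n := by omega
      have := hw (i + 1) j hi1 hj (by omega) (by omega) (by omega)
      rw [this]
      exact hR ⟨i, hi⟩ hi1

lemma deBruijn_reachable {d n : ℕ} (hn : 1 ≤ n) (u v : Fin n → Fin d) :
    (deBruijnGraph d n).Reachable u v := by
  set W : ℕ → (Fin n → Fin d) := fun m j =>
    if h : (j : ℕ) + m < n then u ⟨(j : ℕ) + m, h⟩
    else v ⟨((j : ℕ) + m - n) % n, Nat.mod_lt _ (by omega)⟩ with hW
  have hstep : ∀ m, (deBruijnGraph d n).Reachable (W m) (W (m + 1)) := by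
    intro m
    by_cases heq : W m = W (m + 1)
    · rw [heq]
    · apply SimpleGraph.Adj.reachable
      refine ⟨heq, Or.inl ?_⟩
      intro i hi
      simp only [hW]
      have e : (i : ℕ) + 1 + m = (i : ℕ) + (m + 1) := by omega
      simp only [e]
  have hall : ∀ m, (deBruijnGraph d n).Reachable u (W m) := by
    intro m
    induction m with
    | zero =>
      have : W 0 = u := by
        funext j
        simp only [hW]
        rw [dif_pos (by omega : (j : ℕ) + 0 < n)]
        congr 1
      rw [this]
    | succ m ih => exact ih.trans (hstep m)
  have hWn : W n = v := by
    funext j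
    simp only [hW]
    rw [dif_neg (by omega : ¬ (j : ℕ) + n < n)]
    congr 1
    apply Fin.ext
    simp [Nat.mod_eq_of_lt j.isLt]
  exact hWn ▸ hall n

lemma right_case {d t n : ℕ} (hd : 3 ≤ d) (ht : 1 ≤ t) (hn : 2 * t ≤ n)
    (x y : Fin n → Fin d) (p : Fin n) (hp : (p : ℕ) + t < n) (hne : x p ≠ y p) :
    ∃ z, (deBruijnGraph d n).dist x z ≤ t ∧ ¬ (deBruijnGraph d n).dist y z ≤ t := by
  have htn : t < n := by omega
  set C : ℕ → Fin d := fun j =>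
    (exists_third hd (y ⟨t - 1 - j, by omega⟩) (y ⟨t - j, by omega⟩)).choose with hC
  have hC1 : ∀ j, C j ≠ y ⟨t - 1 - j, by omega⟩ := fun j =>
    ((exists_third hd _ _).choose_spec).1
  have hC2 : ∀ j, C j ≠ y ⟨t - j, by omega⟩ := fun j =>
    ((exists_third hd _ _).choose_spec).2
  set Z : ℕ → (Fin n → Fin d) := fun m j =>
    if _ : (j : ℕ) < m then C ((j : ℕ) + (t - m))
    else x ⟨(j : ℕ) - m, Nat.lt_of_le_of_lt (Nat.sub_le _ _) j.isLt⟩ with hZ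
  have hwalk : ∀ m, m ≤ t → ∃ w : (deBruijnGraph d n).Walk x (Z m), w.length ≤ m := by
    intro m
    induction m with
    | zero =>
      intro _
      have hz0 : Z 0 = x := by
        funext j; simp only [hZ]
        rw [dif_neg (by omega)]
        congr 1
      rw [hz0]
      exact ⟨SimpleGraph.Walk.nil, by simp⟩
    | succ m ih =>
      intro hm
      obtain ⟨w, hw⟩ := ih (by omega)
      by_cases heq : Z (m + 1) = Z m
      · rw [heq]; exact ⟨w, by omega⟩
      · have hadj : (deBruijnGraph d n).Adj (Z m) (Z (m + 1)) := by
          refine ⟨fun h => heq h.symm, Or.inr ?_⟩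
          intro i hi
          simp only [hZ]
          by_cases h1 : (i : ℕ) < m
          · rw [dif_pos (show ((⟨(i : ℕ) + 1, hi⟩ : Fin n) : ℕ) < m + 1 from
              show (i : ℕ) + 1 < m + 1 by omega), dif_pos h1]
            congr 1
            exact show (i : ℕ) + 1 + (t - (m + 1)) = (i : ℕ) + (t - m) by omega
          · rw [dif_neg (show ¬ ((⟨(i : ℕ) + 1, hi⟩ : Fin n) : ℕ) < m + 1 from
              show ¬ (i : ℕ) + 1 < m + 1 by omega), dif_neg h1]
            congr 1
            exact Fin.ext (show (i : ℕ) + 1 - (m + 1) = (i : ℕ) - m by omega)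
        exact ⟨w.concat hadj, by rw [SimpleGraph.Walk.length_concat]; omega⟩
  obtain ⟨w, hw⟩ := hwalk t le_rfl
  have hZts : ∀ (j : ℕ) (hj : j < n), j < t → Z t ⟨j, hj⟩ = C j := by
    intro j hj hj2
    simp only [hZ]
    rw [dif_pos (show ((⟨j, hj⟩ : Fin n) : ℕ) < t from show j < t from hj2)]
    congr 1
    exact show j + (t - t) = j by omega
  have hZtb : ∀ (j k : ℕ) (hj : j < n) (hk : k < n), j = k + t →
      Z t ⟨j, hj⟩ = x ⟨k, hk⟩ := by
    intro j k hj hk hjk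
    simp only [hZ]
    rw [dif_neg (show ¬ ((⟨j, hj⟩ : Fin n) : ℕ) < t from show ¬ j < t by omega)]
    congr 1
    exact Fin.ext (show j - t = k by omega)
  refine ⟨Z t, le_trans (SimpleGraph.dist_le w) hw, ?_⟩
  intro hdist
  obtain ⟨w', hw'⟩ := (deBruijn_reachable (by omega) y (Z t)).exists_walk_length_eq_dist
  obtain ⟨a, b, hab, hmatch⟩ := walk_window w'
  rw [hw'] at hab
  have hab' : a + b ≤ t := le_trans hab hdist
  by_cases hb : b = t
  · have ha : a = 0 := by omega
    have hm := hmatch (p : ℕ) ((p : ℕ) + t) p.isLt (by omega) (by omega) (by omega) (by omega)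
    rw [hZtb ((p : ℕ) + t) (p : ℕ) (by omega) p.isLt rfl] at hm
    exact hne hm
  · have hblt : b < t := by omega
    rcases Nat.even_or_odd (t + a + b) with ⟨q, hq⟩ | ⟨q, hq⟩
    · -- even : use hC2 with j = e, i = t - e
      set e := q - a with hedef
      have he : e + e + a = t + b := by omega
      have hm := hmatch (t - e) e (by omega) (by omega) (by omega) (by omega) (by omega)
      rw [hZts e (by omega) (by omega)] at hm
      exact hC2 e hm
    · -- odd : use hC1 with j = e, i = t - 1 - e
      set e := q - a with hedef
      have he : e + e + 1 + a = t + b := by omega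
      have hm := hmatch (t - 1 - e) e (by omega) (by omega) (by omega) (by omega) (by omega)
      rw [hZts e (by omega) (by omega)] at hm
      exact hC1 e hm

lemma left_case {d t n : ℕ} (hd : 3 ≤ d) (ht : 1 ≤ t) (hn : 2 * t ≤ n)
    (x y : Fin n → Fin d) (p : Fin n) (hp : t ≤ (p : ℕ)) (hne : x p ≠ y p) :
    ∃ z, (deBruijnGraph d n).dist x z ≤ t ∧ ¬ (deBruijnGraph d n).dist y z ≤ t := by
  have htn : t < n := by omega
  set C : ℕ → Fin d := fun j =>
    (exists_third hd (y ⟨min (2 * n - t - 1 - j) (n - 1), by omega⟩)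
      (y ⟨min (2 * n - t - 2 - j) (n - 1), by omega⟩)).choose with hC
  have hC1raw : ∀ j, C j ≠ y ⟨min (2 * n - t - 1 - j) (n - 1), by omega⟩ := fun j =>
    ((exists_third hd _ _).choose_spec).1
  have hC2raw : ∀ j, C j ≠ y ⟨min (2 * n - t - 2 - j) (n - 1), by omega⟩ := fun j =>
    ((exists_third hd _ _).choose_spec).2
  have hC1 : ∀ (j i : ℕ) (hi : i < n), i + j + t + 1 = 2 * n → C j ≠ y ⟨i, hi⟩ := by
    intro j i hi hij
    have h2 := hC1raw j
    have e : (⟨min (2 * n - t - 1 - j) (n - 1), by omega⟩ : Fin n) = (⟨i, hi⟩ : Fin n) :=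
      Fin.ext (show min (2 * n - t - 1 - j) (n - 1) = i by omega)
    rw [e] at h2; exact h2
  have hC2 : ∀ (j i : ℕ) (hi : i < n), i + j + t + 2 = 2 * n → C j ≠ y ⟨i, hi⟩ := by
    intro j i hi hij
    have h2 := hC2raw j
    have e : (⟨min (2 * n - t - 2 - j) (n - 1), by omega⟩ : Fin n) = (⟨i, hi⟩ : Fin n) :=
      Fin.ext (show min (2 * n - t - 2 - j) (n - 1) = i by omega)
    rw [e] at h2; exact h2
  set Z : ℕ → (Fin n → Fin d) := fun m j =>
    if h : (j : ℕ) + m < n then x ⟨(j : ℕ) + m, h⟩ else C ((j : ℕ) + m - t) with hZ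
  have hwalk : ∀ m, m ≤ t → ∃ w : (deBruijnGraph d n).Walk x (Z m), w.length ≤ m := by
    intro m
    induction m with
    | zero =>
      intro _
      have hz0 : Z 0 = x := by
        funext j; simp only [hZ]
        rw [dif_pos (show (j : ℕ) + 0 < n by omega)]
        exact congrArg x (Fin.ext rfl)
      rw [hz0]
      exact ⟨SimpleGraph.Walk.nil, by simp⟩
    | succ m ih =>
      intro hm
      obtain ⟨w, hw⟩ := ih (by omega)
      by_cases heq : Z (m + 1) = Z m
      · rw [heq]; exact ⟨w, by omega⟩
      · have hadj : (deBruijnGraph d n).Adj (Z m) (Z (m + 1)) := by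
          refine ⟨fun h => heq h.symm, Or.inl ?_⟩
          intro i hi
          simp only [hZ]
          have e : (i : ℕ) + 1 + m = (i : ℕ) + (m + 1) := by omega
          simp only [e]
        exact ⟨w.concat hadj, by rw [SimpleGraph.Walk.length_concat]; omega⟩
  obtain ⟨w, hw⟩ := hwalk t le_rfl
  have hZx : ∀ (j k : ℕ) (hj : j < n) (hk : k < n), j + t = k → Z t ⟨j, hj⟩ = x ⟨k, hk⟩ := by
    intro j k hj hk hjk
    simp only [hZ]
    rw [dif_pos (show ((⟨j, hj⟩ : Fin n) : ℕ) + t < n from show j + t < n by omega)]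
    congr 1
    exact Fin.ext (show j + t = k from hjk)
  have hZc : ∀ (j : ℕ) (hj : j < n), n ≤ j + t → Z t ⟨j, hj⟩ = C j := by
    intro j hj hj2
    simp only [hZ]
    rw [dif_neg (show ¬ ((⟨j, hj⟩ : Fin n) : ℕ) + t < n from show ¬ j + t < n by omega)]
    congr 1
    exact show j + t - t = j by omega
  refine ⟨Z t, le_trans (SimpleGraph.dist_le w) hw, ?_⟩
  intro hdist
  obtain ⟨w', hw'⟩ := (deBruijn_reachable (by omega) y (Z t)).exists_walk_length_eq_dist
  obtain ⟨a, b, hab, hmatch⟩ := walk_window w'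
  rw [hw'] at hab
  have hab' : a + b ≤ t := le_trans hab hdist
  by_cases ha : a = t
  · have hb : b = 0 := by omega
    have hm := hmatch (p : ℕ) ((p : ℕ) - t) p.isLt (by omega) (by omega) (by omega) (by omega)
    rw [hZx ((p : ℕ) - t) (p : ℕ) (by omega) p.isLt (by omega)] at hm
    exact hne hm
  · have halt : a < t := by omega
    rcases Nat.even_or_odd (t + a + b) with ⟨q, hq⟩ | ⟨q, hq⟩
    · -- even : j = n - 1 - e, i = n - t - 1 + e, use hC2
      set e := q - b with hedef
      have he : e + e + b = t + a := by omega
      have hm := hmatch (n - t - 1 + e) (n - 1 - e) (by omega) (by omega) (by omega)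
        (by omega) (by omega)
      rw [hZc (n - 1 - e) (by omega) (by omega)] at hm
      exact hC2 (n - 1 - e) (n - t - 1 + e) (by omega) (by omega) hm
    · -- odd : j = n - 1 - e, i = n - t + e, use hC1
      set e := q - b with hedef
      have he : e + e + 1 + b = t + a := by omega
      have hm := hmatch (n - t + e) (n - 1 - e) (by omega) (by omega) (by omega)
        (by omega) (by omega)
      rw [hZc (n - 1 - e) (by omega) (by omega)] at hm
      exact hC1 (n - 1 - e) (n - t + e) (by omega) (by omega) hm


theorem deBruijn_identifiable (d t n : ℕ) (hd : 3 ≤ d) (ht : 1 ≤ t) (hn : 2 * t ≤ n) :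
    ∃ S : Set (Fin n → Fin d), IsIdentifyingCode (deBruijnGraph d n) t S := by
  refine ⟨Set.univ, fun x => ⟨x, by simp [ball, SimpleGraph.dist_self], trivial⟩, ?_⟩
  intro x y hxy hEq
  simp only [Set.inter_univ] at hEq
  obtain ⟨p, hp⟩ := Function.ne_iff.mp hxy
  have key : ∃ z, (deBruijnGraph d n).dist x z ≤ t ∧ ¬ (deBruijnGraph d n).dist y z ≤ t := by
    by_cases hc : (p : ℕ) + t < n
    · exact right_case hd ht hn x y p hc hp
    · have hplt := p.isLt
      exact left_case hd ht hn x y p (by omega) hp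
  obtain ⟨z, h1, h2⟩ := key
  have hz : z ∈ ball (deBruijnGraph d n) t x := h1
  rw [hEq] at hz
  exact h2 hz
end

section
/- For every integer d ≥ 3, the undirected de Bruijn graph B(d,3) admits a 2-identifying code. -/
variable {d : ℕ}

lemma dB_adj_iff {x y : Fin 3 → Fin d} :
    (deBruijnGraph d 3).Adj x y ↔ x ≠ y ∧
      ((x 1 = y 0 ∧ x 2 = y 1) ∨ (y 1 = x 0 ∧ y 2 = x 1)) := by
  constructor
  · rintro ⟨hne, h | h⟩
    · exact ⟨hne, Or.inl ⟨h 0 (by norm_num), h 1 (by norm_num)⟩⟩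
    · exact ⟨hne, Or.inr ⟨h 0 (by norm_num), h 1 (by norm_num)⟩⟩
  · rintro ⟨hne, h | h⟩
    · refine ⟨hne, Or.inl ?_⟩
      intro i hi
      fin_cases i
      · exact h.1
      · exact h.2
      · simp at hi
    · refine ⟨hne, Or.inr ?_⟩
      intro i hi
      fin_cases i
      · exact h.1
      · exact h.2
      · simp at hi

def Q (a b c p q r : Fin d) : Prop :=
  p = c ∨ r = a ∨ (p = b ∧ q = c) ∨ (q = a ∧ r = b) ∨ (p = a ∧ q = b) ∨ (q = b ∧ r = c)

lemma step_right {x m : Fin 3 → Fin d} (h1 : x 1 = m 0) (h2 : x 2 = m 1) :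
    x = m ∨ (deBruijnGraph d 3).Adj x m := by
  by_cases h : x = m
  · exact Or.inl h
  · exact Or.inr (dB_adj_iff.mpr ⟨h, Or.inl ⟨h1, h2⟩⟩)

lemma step_left {x m : Fin 3 → Fin d} (h1 : m 1 = x 0) (h2 : m 2 = x 1) :
    x = m ∨ (deBruijnGraph d 3).Adj x m := by
  by_cases h : x = m
  · exact Or.inl h
  · exact Or.inr (dB_adj_iff.mpr ⟨h, Or.inr ⟨h1, h2⟩⟩)

lemma dist_le_two_of {x m y : Fin 3 → Fin d}
    (hxm : x = m ∨ (deBruijnGraph d 3).Adj x m)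
    (hmy : m = y ∨ (deBruijnGraph d 3).Adj m y) :
    (deBruijnGraph d 3).dist x y ≤ 2 := by
  rcases hxm with rfl | hxm <;> rcases hmy with rfl | hmy
  · simp [SimpleGraph.dist_self]
  · exact le_trans (SimpleGraph.dist_le (SimpleGraph.Walk.cons hmy SimpleGraph.Walk.nil)) (by simp)
  · exact le_trans (SimpleGraph.dist_le (SimpleGraph.Walk.cons hxm SimpleGraph.Walk.nil)) (by simp)
  · exact le_trans (SimpleGraph.dist_le
      (SimpleGraph.Walk.cons hxm (SimpleGraph.Walk.cons hmy SimpleGraph.Walk.nil))) (by simp)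

lemma step_reachable {x m : Fin 3 → Fin d} (h : x = m ∨ (deBruijnGraph d 3).Adj x m) :
    (deBruijnGraph d 3).Reachable x m := by
  rcases h with rfl | h
  · rfl
  · exact h.reachable

lemma dB_preconnected : ∀ x y : Fin 3 → Fin d, (deBruijnGraph d 3).Reachable x y := by
  intro x y
  have h1 : (deBruijnGraph d 3).Reachable x ![x 1, x 2, y 0] :=
    step_reachable (step_right (by simp) (by simp))
  have h2 : (deBruijnGraph d 3).Reachable ![x 1, x 2, y 0] ![x 2, y 0, y 1] :=
    step_reachable (step_right (by simp) (by simp))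
  have h3 : (deBruijnGraph d 3).Reachable ![x 2, y 0, y 1] y :=
    step_reachable (step_right (by simp) (by simp))
  exact (h1.trans h2).trans h3

lemma mem_ball_iff {x y : Fin 3 → Fin d} :
    y ∈ ball (deBruijnGraph d 3) 2 x ↔ Q (x 0) (x 1) (x 2) (y 0) (y 1) (y 2) := by
  constructor
  · intro hy
    have hy' : (deBruijnGraph d 3).dist x y ≤ 2 := hy
    obtain ⟨p, hp⟩ := (dB_preconnected x y).exists_walk_length_eq_dist
    rw [← hp] at hy'
    clear hp hy
    cases p with
    | nil => exact Or.inr (Or.inr (Or.inr (Or.inr (Or.inl ⟨rfl, rfl⟩))))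
    | cons h q =>
      cases q with
      | nil =>
        rcases dB_adj_iff.mp h with ⟨-, ⟨h1, h2⟩ | ⟨h1, h2⟩⟩
        · exact Or.inr (Or.inr (Or.inl ⟨h1.symm, h2.symm⟩))
        · exact Or.inr (Or.inr (Or.inr (Or.inl ⟨h1, h2⟩)))
      | cons h' q' =>
        cases q' with
        | nil =>
          rcases dB_adj_iff.mp h with ⟨-, ⟨h1, h2⟩ | ⟨h1, h2⟩⟩ <;>
            rcases dB_adj_iff.mp h' with ⟨-, ⟨h3, h4⟩ | ⟨h3, h4⟩⟩
          · exact Or.inl (h3 ▸ h2.symm)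
          · exact Or.inr (Or.inr (Or.inr (Or.inr (Or.inr ⟨h3 ▸ h1.symm, h4 ▸ h2.symm⟩))))
          · exact Or.inr (Or.inr (Or.inr (Or.inr (Or.inl ⟨h3 ▸ h1, h4 ▸ h2⟩))))
          · exact Or.inr (Or.inl (h4 ▸ h1))
        | cons h'' q'' =>
          simp only [SimpleGraph.Walk.length_cons] at hy'
          omega
  · rintro (h | h | ⟨h1, h2⟩ | ⟨h1, h2⟩ | ⟨h1, h2⟩ | ⟨h1, h2⟩)
    · exact dist_le_two_of (step_right (x := x) (m := ![x 1, x 2, y 1]) (by simp) (by simp))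
        (step_right (by simp [h.symm]) (by simp))
    · exact dist_le_two_of (step_left (x := x) (m := ![y 1, x 0, x 1]) (by simp) (by simp))
        (step_left (by simp) (by simp [h]))
    · exact dist_le_two_of (step_right h1.symm h2.symm) (Or.inl rfl)
    · exact dist_le_two_of (step_left h1 h2) (Or.inl rfl)
    · exact dist_le_two_of (step_left (x := x) (m := ![y 2, x 0, x 1]) (by simp) (by simp))
        (step_right (by simp [h1.symm]) (by simp [h2.symm]))
    · exact dist_le_two_of (step_right (x := x) (m := ![x 1, x 2, y 0]) (by simp) (by simp))
        (step_left (by simp [h1]) (by simp [h2]))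

lemma fresh (hd : 3 ≤ d) (u v : Fin d) : ∃ w : Fin d, w ≠ u ∧ w ≠ v := by
  by_contra hcon
  push_neg at hcon
  have hsub : (Finset.univ : Finset (Fin d)) ⊆ {u, v} := by
    intro w _
    rcases ne_or_eq w u with h | h
    · simp [hcon w h]
    · simp [h]
  have := Finset.card_le_card hsub
  simp at this
  have h2 : ({u, v} : Finset (Fin d)).card ≤ 2 :=
    le_trans (Finset.card_insert_le _ _) (by simp)
  omega

lemma keyQ (hd : 3 ≤ d) {a b c a' b' c' : Fin d}
    (H : ∀ p q r : Fin d, Q a b c p q r ↔ Q a' b' c' p q r) :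
    a = a' ∧ b = b' ∧ c = c' := by
  have hc : c = c' := by
    obtain ⟨w1, hw11, hw12⟩ := fresh hd b' c'
    obtain ⟨w2, hw21, hw22⟩ := fresh hd a' b'
    rcases (H c w1 w2).mp (Or.inl rfl) with h | h | ⟨h1, h2⟩ | ⟨h1, h2⟩ | ⟨h1, h2⟩ | ⟨h1, h2⟩
    · exact h
    · exact absurd h hw21
    · exact absurd h2 hw12
    · exact absurd h2 hw22
    · exact absurd h2 hw11
    · exact absurd h1 hw11
  have ha : a = a' := by
    obtain ⟨w0, hw01, hw02⟩ := fresh hd b' c'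
    obtain ⟨w1, hw11, hw12⟩ := fresh hd a' b'
    rcases (H w0 w1 a).mp (Or.inr (Or.inl rfl)) with h | h | ⟨h1, h2⟩ | ⟨h1, h2⟩ | ⟨h1, h2⟩ | ⟨h1, h2⟩
    · exact absurd h hw02
    · exact h
    · exact absurd h1 hw01
    · exact absurd h1 hw11
    · exact absurd h2 hw12
    · exact absurd h1 hw12
  subst hc
  subst ha
  refine ⟨rfl, ?_, rfl⟩
  by_cases hac : a = c
  · subst hac
    obtain ⟨w, hw1, hw2⟩ := fresh hd a b'
    obtain ⟨w', hw1', hw2'⟩ := fresh hd a b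
    have hx : b = a ∨ b = b' := by
      rcases (H b a w).mp (Or.inr (Or.inr (Or.inl ⟨rfl, rfl⟩))) with
        h | h | ⟨h1, h2⟩ | ⟨h1, h2⟩ | ⟨h1, h2⟩ | ⟨h1, h2⟩
      · exact Or.inl h
      · exact absurd h hw1
      · exact Or.inr h1
      · exact absurd h2 hw2
      · exact Or.inr (h1.trans h2)
      · exact absurd h2 hw1
    have hy : b' = a ∨ b' = b := by
      rcases (H b' a w').mpr (Or.inr (Or.inr (Or.inl ⟨rfl, rfl⟩))) with
        h | h | ⟨h1, h2⟩ | ⟨h1, h2⟩ | ⟨h1, h2⟩ | ⟨h1, h2⟩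
      · exact Or.inl h
      · exact absurd h hw1'
      · exact Or.inr h1
      · exact absurd h2 hw2'
      · exact Or.inr (h1.trans h2)
      · exact absurd h2 hw1'
    rcases hx with hx | hx
    · rcases hy with hy | hy
      · exact hx.trans hy.symm
      · exact hy.symm
    · exact hx
  · obtain ⟨w, hw1, hw2⟩ := fresh hd a c
    have hx : b = c ∨ b = b' ∨ (b = a ∧ c = b') := by
      rcases (H b c w).mp (Or.inr (Or.inr (Or.inl ⟨rfl, rfl⟩))) with
        h | h | ⟨h1, h2⟩ | ⟨h1, h2⟩ | ⟨h1, h2⟩ | ⟨h1, h2⟩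
      · exact Or.inl h
      · exact absurd h hw1
      · exact Or.inr (Or.inl h1)
      · exact absurd h1.symm hac
      · exact Or.inr (Or.inr ⟨h1, h2⟩)
      · exact absurd h2 hw2
    have hy : b' = c ∨ b' = b ∨ (b' = a ∧ c = b) := by
      rcases (H b' c w).mpr (Or.inr (Or.inr (Or.inl ⟨rfl, rfl⟩))) with
        h | h | ⟨h1, h2⟩ | ⟨h1, h2⟩ | ⟨h1, h2⟩ | ⟨h1, h2⟩
      · exact Or.inl h
      · exact absurd h hw1
      · exact Or.inr (Or.inl h1)
      · exact absurd h1.symm hac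
      · exact Or.inr (Or.inr ⟨h1, h2⟩)
      · exact absurd h2 hw2
    rcases hx with hx | hx | ⟨hba, hcb'⟩
    · rcases hy with hy | hy | ⟨hb'a, hcb⟩
      · exact hx.trans hy.symm
      · exact hy.symm
      · -- twin case 1 : b = c, b' = a, c = b
        rcases (H w b c).mp (Or.inr (Or.inr (Or.inr (Or.inr (Or.inr ⟨rfl, rfl⟩))))) with
          h | h | ⟨h1, h2⟩ | ⟨h1, h2⟩ | ⟨h1, h2⟩ | ⟨h1, h2⟩
        · exact absurd h hw2
        · exact absurd h.symm hac
        · exact absurd (h1.trans hb'a) hw1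
        · exact absurd (h2.trans hb'a).symm hac
        · exact absurd h1 hw1
        · exact h1
    · exact hx
    · rcases hy with hy | hy | ⟨hb'a, hcb⟩
      · -- twin case 2 : b = a, c = b', b' = c
        rcases (H w b' c).mpr (Or.inr (Or.inr (Or.inr (Or.inr (Or.inr ⟨rfl, rfl⟩))))) with
          h | h | ⟨h1, h2⟩ | ⟨h1, h2⟩ | ⟨h1, h2⟩ | ⟨h1, h2⟩
        · exact absurd h hw2
        · exact absurd h.symm hac
        · exact absurd (h1.trans hba) hw1
        · exact absurd (h2.trans hba).symm hac
        · exact absurd h1 hw1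
        · exact h1.symm
      · exact hy.symm
      · exact hba.trans hb'a.symm

theorem deBruijn_n3_two_identifiable (d : ℕ) (hd : 3 ≤ d) :
    ∃ S : Set (Fin 3 → Fin d), IsIdentifyingCode (deBruijnGraph d 3) 2 S := by
  refine ⟨Set.univ, fun x => ⟨x, by simp [ball, SimpleGraph.dist_self], trivial⟩, ?_⟩
  intro x y hxy hEq
  apply hxy
  have hball : ball (deBruijnGraph d 3) 2 x = ball (deBruijnGraph d 3) 2 y := by
    simpa using hEq
  have H : ∀ p q r : Fin d, Q (x 0) (x 1) (x 2) p q r ↔ Q (y 0) (y 1) (y 2) p q r := by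
    intro p q r
    constructor
    · intro h
      have h1 : ![p, q, r] ∈ ball (deBruijnGraph d 3) 2 x := mem_ball_iff.mpr h
      have h2 : ![p, q, r] ∈ ball (deBruijnGraph d 3) 2 y := hball ▸ h1
      exact mem_ball_iff.mp h2
    · intro h
      have h1 : ![p, q, r] ∈ ball (deBruijnGraph d 3) 2 y := mem_ball_iff.mpr h
      have h2 : ![p, q, r] ∈ ball (deBruijnGraph d 3) 2 x := hball ▸ h1
      exact mem_ball_iff.mp h2
  obtain ⟨ha, hb, hc⟩ := keyQ hd H
  funext i
  fin_cases i <;> assumption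
end

section
/- For every integer n ≥ 3, the undirected binary de Bruijn graph B(2,n) admits a 1-identifying code. -/
/-!
The whole vertex set is a `1`-identifying code as soon as distinct vertices have distinct closed
neighbourhoods `N[x]`. Suppose `N[x] = N[y]` with `y = x₂⋯xₙa` a successor of `x`. Changing the
first letter of `x` to some `b ≠ x₁` gives a vertex `x'` with the same successors, so
`x' ∈ N[y] = N[x]`. A vertex adjacent to `x` and differing from it only in the first letter forces
`x` to be `eⁿ` or `b eⁿ⁻¹` with `b ≠ e`. In the first case `eⁿ⁻²aa ∈ N[y] \ N[x]`, in the second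
`bbeⁿ⁻² ∈ N[x] \ N[y]`; the latter needs `n ≥ 3`, and indeed `B(2,2)` has twins.
-/

open Set

lemma SimpleGraph.Reachable.dist_le_one_iff {V : Type*} {G : SimpleGraph V} {u v : V}
    (h : G.Reachable u v) : G.dist u v ≤ 1 ↔ u = v ∨ G.Adj u v := by
  rw [Nat.le_one_iff_eq_zero_or_eq_one, h.dist_eq_zero_iff, SimpleGraph.dist_eq_one_iff_adj]

lemma mem_ball_self {V : Type*} (G : SimpleGraph V) (t : ℕ) (x : V) : x ∈ ball G t x := by
  simp [ball]

lemma mem_ball_one_iff_of_preconnected {V : Type*} {G : SimpleGraph V} (hG : G.Preconnected)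
    {x y : V} :
    y ∈ ball G 1 x ↔ x = y ∨ G.Adj x y :=
  (hG x y).dist_le_one_iff

lemma isIdentifyingCode_univ {V : Type*} {G : SimpleGraph V} {t : ℕ}
    (h : Function.Injective (ball G t)) : IsIdentifyingCode G t univ :=
  ⟨fun x ↦ ⟨x, mem_ball_self G t x, trivial⟩,
    fun _ _ hxy ↦ by simpa only [inter_univ] using h.ne hxy⟩

namespace DeBruijn

variable {α : Type*} {n : ℕ}

/-- The successor `x₂⋯xₙa` of `x₁⋯xₙ`. -/
def shift (x : Fin n → α) (a : α) : Fin n → α :=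
  fun i ↦ if h : (i : ℕ) + 1 < n then x ⟨i + 1, h⟩ else a

lemma shift_apply_of_lt (x : Fin n → α) (a : α) {i : Fin n} (h : (i : ℕ) + 1 < n) :
    shift x a i = x ⟨i + 1, h⟩ :=
  dif_pos h

lemma shift_apply_of_not_lt (x : Fin n → α) (a : α) {i : Fin n} (h : ¬(i : ℕ) + 1 < n) :
    shift x a i = a :=
  dif_neg h

lemma shift_congr {x x' : Fin n → α} (h : ∀ i : Fin n, (i : ℕ) ≠ 0 → x i = x' i) (a : α) :
    shift x a = shift x' a := by
  funext i
  unfold shift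
  split_ifs
  · exact h _ (by simp)
  · rfl

lemma shift_const (a : α) : shift (fun _ : Fin n ↦ a) a = fun _ ↦ a := by
  funext i
  unfold shift
  split_ifs <;> rfl

lemma eq_const_of_shift_eq_self {x : Fin n → α} {a : α} (h : shift x a = x) :
    x = fun _ ↦ a := by
  funext i
  obtain ⟨k, hk⟩ : ∃ k, (i : ℕ) + k + 1 = n := ⟨n - i - 1, by omega⟩
  induction k generalizing i with
  | zero => rw [← h, shift_apply_of_not_lt _ _ (by omega)]
  | succ k ih => rw [← h, shift_apply_of_lt _ _ (by omega), ih _ (by simp only; omega)]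

lemma exists_eq_shift_iff (hn : n ≠ 0) {x y : Fin n → α} :
    (∃ a, y = shift x a) ↔ ∀ i : Fin n, ∀ h : (i : ℕ) + 1 < n, x ⟨i + 1, h⟩ = y i := by
  constructor
  · rintro ⟨a, rfl⟩ i h
    exact (shift_apply_of_lt x a h).symm
  · refine fun h ↦ ⟨y ⟨n - 1, by omega⟩, funext fun i ↦ ?_⟩
    by_cases hi : (i : ℕ) + 1 < n
    · rw [shift_apply_of_lt _ _ hi, h i hi]
    · rw [shift_apply_of_not_lt _ _ hi]
      exact congrArg y (Fin.ext (by simp only; omega))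

end DeBruijn

open DeBruijn

section deBruijnGraph

variable {d n : ℕ}

lemma deBruijnGraph_adj_iff {x y : Fin n → Fin d} :
    (deBruijnGraph d n).Adj x y ↔ x ≠ y ∧ ((∃ a, y = shift x a) ∨ ∃ a, x = shift y a) := by
  rcases Nat.eq_zero_or_pos n with rfl | hn
  · simp [deBruijnGraph, Subsingleton.elim x y]
  · simp only [deBruijnGraph, exists_eq_shift_iff hn.ne']

lemma deBruijnGraph_reachable_shift (x : Fin n → Fin d) (a : Fin d) :
    (deBruijnGraph d n).Reachable x (shift x a) := by
  by_cases h : x = shift x a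
  · rw [← h]
  · exact (deBruijnGraph_adj_iff.2 ⟨h, .inl ⟨a, rfl⟩⟩).reachable

lemma deBruijnGraph_reachable_of_shifted_eq {x y : Fin n → Fin d} (k : ℕ) (hk : k ≤ n)
    (h : ∀ i : Fin n, ∀ hi : (i : ℕ) + k < n, x ⟨i + k, hi⟩ = y i) :
    (deBruijnGraph d n).Reachable x y := by
  induction k generalizing x with
  | zero => rw [show x = y from funext fun i ↦ h i i.isLt]
  | succ k ih =>
    refine (deBruijnGraph_reachable_shift x (y ⟨n - (k + 1), by omega⟩)).trans
      (ih (by omega) fun i hi ↦ ?_)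
    by_cases hlt : (i : ℕ) + k + 1 < n
    · rw [shift_apply_of_lt _ _ hlt, ← h i (by omega)]
      rfl
    · rw [shift_apply_of_not_lt _ _ hlt]
      exact congrArg y (Fin.ext (by simp only; omega))

lemma deBruijnGraph_preconnected (d n : ℕ) : (deBruijnGraph d n).Preconnected :=
  fun _ _ ↦ deBruijnGraph_reachable_of_shifted_eq n le_rfl fun _ hi ↦ by omega

lemma mem_ball_one_deBruijnGraph_iff {x y : Fin n → Fin d} :
    y ∈ ball (deBruijnGraph d n) 1 x ↔ y = x ∨ (∃ a, y = shift x a) ∨ ∃ a, x = shift y a := by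
  rw [mem_ball_one_iff_of_preconnected (deBruijnGraph_preconnected d n), deBruijnGraph_adj_iff]
  by_cases h : x = y
  · simp [h]
  · simp [h, Ne.symm h]

lemma shift_mem_ball_one (x : Fin n → Fin d) (a : Fin d) :
    shift x a ∈ ball (deBruijnGraph d n) 1 x :=
  mem_ball_one_deBruijnGraph_iff.2 (.inr (.inl ⟨a, rfl⟩))

lemma ball_one_const_ne_ball_one_shift (hn : 2 ≤ n) {a e : Fin d} (hae : a ≠ e) :
    ball (deBruijnGraph d n) 1 (fun _ ↦ e) ≠
      ball (deBruijnGraph d n) 1 (shift (fun _ : Fin n ↦ e) a) := by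
  set w := shift (shift (fun _ : Fin n ↦ e) a) a
  have hw : ∀ i : Fin n, n - 2 ≤ i → w i = a := by
    intro i hi
    simp only [w]
    by_cases hlt : (i : ℕ) + 1 < n
    · rw [shift_apply_of_lt _ _ hlt, shift_apply_of_not_lt _ _ (by simp only; omega)]
    · rw [shift_apply_of_not_lt _ _ hlt]
  intro hball
  have hw_mem : w ∈ ball (deBruijnGraph d n) 1 (fun _ ↦ e) := hball ▸ shift_mem_ball_one _ a
  have h₂ : n - 2 + 1 < n := by omega
  refine hae ?_
  rcases mem_ball_one_deBruijnGraph_iff.1 hw_mem with h | ⟨f, h⟩ | ⟨f, h⟩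
  · rw [← hw ⟨n - 2, by omega⟩ le_rfl, h]
  · rw [← hw ⟨n - 2, by omega⟩ le_rfl, h, shift_apply_of_lt _ _ h₂]
  · have := congrFun h ⟨n - 2, by omega⟩
    rw [shift_apply_of_lt _ _ h₂, hw _ (by simp only; omega)] at this
    exact this.symm

lemma ball_one_ne_ball_one_shift_const (hn : 3 ≤ n) {b e : Fin d} (hbe : b ≠ e) (a : Fin d) :
    ball (deBruijnGraph d n) 1 (fun i ↦ if (i : ℕ) = 0 then b else e) ≠
      ball (deBruijnGraph d n) 1 (shift (fun _ : Fin n ↦ e) a) := by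
  set z : Fin n → Fin d := fun i ↦ if (i : ℕ) ≤ 1 then b else e
  have hz_mem : z ∈ ball (deBruijnGraph d n) 1 (fun i ↦ if (i : ℕ) = 0 then b else e) := by
    refine mem_ball_one_deBruijnGraph_iff.2 (.inr (.inr ⟨e, funext fun i ↦ ?_⟩))
    by_cases hlt : (i : ℕ) + 1 < n
    · simp only [shift_apply_of_lt _ _ hlt, z]
      split_ifs <;> omega
    · simp only [shift_apply_of_not_lt _ _ hlt]
      rw [if_neg (by omega)]
  have hy : ∀ i : Fin n, (i : ℕ) + 1 < n → shift (fun _ : Fin n ↦ e) a i = e :=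
    fun i hi ↦ shift_apply_of_lt _ _ hi
  intro hball
  rw [hball] at hz_mem
  refine hbe ?_
  rcases mem_ball_one_deBruijnGraph_iff.1 hz_mem with h | ⟨f, h⟩ | ⟨f, h⟩
  · simpa [z, hy ⟨0, by omega⟩ (by simp only; omega)] using congrFun h ⟨0, by omega⟩
  · have := congrFun h ⟨0, by omega⟩
    rw [shift_apply_of_lt _ _ (by simp only; omega), hy _ (by simp only; omega)] at this
    simpa [z] using this
  · have := congrFun h ⟨0, by omega⟩
    rw [hy _ (by simp only; omega), shift_apply_of_lt _ _ (by simp only; omega)] at this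
    simpa [z] using this.symm

lemma exists_forall_ne_zero_eq_of_mem_ball_one {x x' : Fin n → Fin d} (hne : x' ≠ x)
    (hagree : ∀ i : Fin n, (i : ℕ) ≠ 0 → x' i = x i)
    (hmem : x' ∈ ball (deBruijnGraph d n) 1 x) :
    ∃ e, ∀ i : Fin n, (i : ℕ) ≠ 0 → x i = e := by
  rcases mem_ball_one_deBruijnGraph_iff.1 hmem with h | ⟨e, h⟩ | ⟨e, h⟩
  · exact absurd h hne
  · have : shift x' e = x' := by rw [shift_congr hagree, ← h]
    exact ⟨e, fun i hi ↦ by rw [← hagree i hi, eq_const_of_shift_eq_self this]⟩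
  · have : shift x e = x := by rw [← shift_congr hagree, ← h]
    exact ⟨e, fun i _ ↦ by rw [eq_const_of_shift_eq_self this]⟩

lemma ball_one_ne_ball_one_shift (hd : 2 ≤ d) (hn : 3 ≤ n) {x : Fin n → Fin d} {a : Fin d}
    (hxa : shift x a ≠ x) :
    ball (deBruijnGraph d n) 1 x ≠ ball (deBruijnGraph d n) 1 (shift x a) := by
  intro hball
  have : NeZero n := ⟨by omega⟩
  have : Nontrivial (Fin d) := Fin.nontrivial_iff_two_le.2 hd
  obtain ⟨b, hb⟩ := exists_ne (x 0)
  have hagree : ∀ i : Fin n, (i : ℕ) ≠ 0 → Function.update x 0 b i = x i :=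
    fun i hi ↦ Function.update_of_ne (fun h ↦ hi (by simp [h])) _ _
  have hmem : Function.update x 0 b ∈ ball (deBruijnGraph d n) 1 x :=
    hball ▸ mem_ball_one_deBruijnGraph_iff.2 (.inr (.inr ⟨a, (shift_congr hagree a).symm⟩))
  obtain ⟨e, he⟩ := exists_forall_ne_zero_eq_of_mem_ball_one
    (fun h ↦ hb (by simpa using congrFun h 0)) hagree hmem
  rw [shift_congr he a] at hball hxa
  by_cases hx0 : x 0 = e
  · have hx : x = fun _ ↦ e := funext fun i ↦ by
      by_cases hi : (i : ℕ) = 0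
      · rwa [Fin.val_eq_zero_iff.1 hi]
      · exact he i hi
    rw [hx] at hball hxa
    exact ball_one_const_ne_ball_one_shift (by omega)
      (fun hae ↦ hxa (by rw [hae, shift_const])) hball
  · have hx : x = fun i : Fin n ↦ if (i : ℕ) = 0 then x 0 else e := funext fun i ↦ by
      split_ifs with hi
      · rw [Fin.val_eq_zero_iff.1 hi]
      · exact he i hi
    rw [hx] at hball
    exact ball_one_ne_ball_one_shift_const hn hx0 a hball

theorem deBruijnGraph_ball_one_injective (hd : 2 ≤ d) (hn : 3 ≤ n) :
    Function.Injective (ball (deBruijnGraph d n) 1) := by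
  intro x y hball
  by_contra hne
  rcases mem_ball_one_deBruijnGraph_iff.1 (hball ▸ mem_ball_self _ 1 y) with
    h | ⟨a, rfl⟩ | ⟨a, rfl⟩
  · exact hne h.symm
  · exact ball_one_ne_ball_one_shift hd hn (Ne.symm hne) hball
  · exact ball_one_ne_ball_one_shift hd hn hne hball.symm

end deBruijnGraph

theorem binary_deBruijn_identifiable (n : ℕ) (hn : 3 ≤ n) :
    ∃ S : Set (Fin n → Fin 2), IsIdentifyingCode (deBruijnGraph 2 n) 1 S :=
  ⟨univ, isIdentifyingCode_univ (deBruijnGraph_ball_one_injective le_rfl hn)⟩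
end

section
/- Every 1-identifying code in the undirected binary de Bruijn graph B(2,3) has cardinality at least 4 (so the code {001, 010, 011, 101} is minimum). -/
/-! The traces `B_t(x) ∩ S` of an identifying code are nonempty and pairwise distinct subsets
of `S`, so the `8` vertices of `B(2,3)` inject into the `2 ^ |S| - 1` nonempty subsets of `S`. -/

theorem IsIdentifyingCode.card_lt_two_pow_ncard {V : Type*} [Fintype V] {G : SimpleGraph V}
    {t : ℕ} {S : Set V} (hS : IsIdentifyingCode G t S) : Fintype.card V < 2 ^ S.ncard := by
  classical
  let trace : V → Set S := fun x => Subtype.val ⁻¹' (ball G t x ∩ S)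
  have trace_injective : trace.Injective := by
    intro x y hxy
    by_contra hne
    refine hS.2 x y hne ?_
    simpa [trace, Set.inter_comm] using congrArg (Subtype.val '' ·) hxy
  have empty_notMem_range : ∅ ∉ Set.range trace := by
    rintro ⟨x, hx⟩
    obtain ⟨y, hy⟩ := hS.1 x
    exact (Set.ext_iff.1 hx ⟨y, hy.2⟩).1 hy
  calc Fintype.card V < Fintype.card (Set S) :=
        Fintype.card_lt_of_injective_of_notMem trace trace_injective empty_notMem_range
    _ = 2 ^ S.ncard := by rw [Fintype.card_set, ← Nat.card_eq_fintype_card, Nat.card_coe_set_eq]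

theorem min_code_B23 (S : Set (Fin 3 → Fin 2))
    (hS : IsIdentifyingCode (deBruijnGraph 2 3) 1 S) : 4 ≤ S.ncard := by
  have h : 2 ^ 3 < 2 ^ S.ncard := by simpa using hS.card_lt_two_pow_ncard
  exact (Nat.pow_lt_pow_iff_right (by norm_num)).1 h
end

section
/- Let d ≥ 3, t ≥ 1, and n ≥ 2t be integers, and let x = x_1...x_n and y = y_1...y_n be vertices of the undirected de Bruijn graph B(d,n) such that (x_{t+1},...,x_n) ≠ (y_{t+1},...,y_n). Then there exists a vertex a = a_1...a_n with a_i = x_{t+i} for all 1 ≤ i ≤ n-t such that d(x,a) ≤ t and d(y,a) > t; in particular B_t(x) ≠ B_t(y). -/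
lemma fmk {n a b : ℕ} (ha : a < n) (hb : b < n) (h : a = b) :
    (⟨a, ha⟩ : Fin n) = ⟨b, hb⟩ := Fin.ext h

lemma avoid_exists {d : ℕ} (hd : 3 ≤ d) (u v : Fin d) : ∃ c : Fin d, c ≠ u ∧ c ≠ v := by
  by_contra h
  push_neg at h
  have h0 := h ⟨0, by omega⟩
  have h1 := h ⟨1, by omega⟩
  have h2 := h ⟨2, by omega⟩
  by_cases e0 : (⟨0, by omega⟩ : Fin d) = u
  · by_cases e1 : (⟨1, by omega⟩ : Fin d) = u
    · rw [← e0] at e1; exact absurd (congrArg Fin.val e1).symm (by simp)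
    · have hv1 := h1 e1
      by_cases e2 : (⟨2, by omega⟩ : Fin d) = u
      · rw [← e0] at e2; exact absurd (congrArg Fin.val e2).symm (by simp)
      · have hv2 := h2 e2
        rw [← hv1] at hv2; exact absurd (congrArg Fin.val hv2).symm (by simp)
  · have hv0 := h0 e0
    by_cases e1 : (⟨1, by omega⟩ : Fin d) = u
    · by_cases e2 : (⟨2, by omega⟩ : Fin d) = u
      · rw [← e1] at e2; exact absurd (congrArg Fin.val e2).symm (by simp)
      · have hv2 := h2 e2
        rw [← hv0] at hv2; exact absurd (congrArg Fin.val hv2).symm (by simp)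
    · have hv1 := h1 e1
      rw [← hv0] at hv1; exact absurd (congrArg Fin.val hv1).symm (by simp)

lemma walk_of_shift (d n : ℕ) : ∀ (k : ℕ) (u v : Fin n → Fin d),
    (∀ i : ℕ, (h1 : i < n) → (h2 : k + i < n) → v ⟨i, h1⟩ = u ⟨k + i, h2⟩) →
    ∃ p : (deBruijnGraph d n).Walk u v, p.length ≤ k := by
  intro k
  induction k with
  | zero =>
    intro u v hv
    have huv : u = v := by
      funext i
      have h := hv i i.isLt (by omega)
      exact (h.trans (congrArg u (Fin.ext (Nat.zero_add _)))).symm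
    exact ⟨huv ▸ SimpleGraph.Walk.nil, by subst huv; simp⟩
  | succ k ih =>
    intro u v hv
    rcases Nat.eq_zero_or_pos n with hn0 | hn0
    · have huv : u = v := by funext i; exact absurd i.isLt (by omega)
      exact ⟨huv ▸ SimpleGraph.Walk.nil, by subst huv; simp⟩
    · set w : Fin n → Fin d := fun i =>
        if h : (i : ℕ) + 1 < n then u ⟨(i : ℕ) + 1, h⟩
        else v ⟨(i : ℕ) - k, by omega⟩ with hw
      have hwv : ∀ i : ℕ, (h1 : i < n) → (h2 : k + i < n) → v ⟨i, h1⟩ = w ⟨k + i, h2⟩ := by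
        intro i h1 h2
        by_cases h3 : k + i + 1 < n
        · have : w ⟨k + i, h2⟩ = u ⟨k + i + 1, h3⟩ := by
            simp only [hw]; rw [dif_pos h3]
          rw [this, hv i h1 (by omega)]
          exact congrArg u (fmk _ _ (by omega))
        · have : w ⟨k + i, h2⟩ = v ⟨k + i - k, by omega⟩ := by
            simp only [hw]; rw [dif_neg h3]
          rw [this]
          exact congrArg v (fmk _ _ (by omega))
      obtain ⟨p, hp⟩ := ih w v hwv
      by_cases huw : u = w
      · exact ⟨p.copy huw.symm rfl, by rw [SimpleGraph.Walk.length_copy]; omega⟩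
      · have hadj : (deBruijnGraph d n).Adj u w := by
          refine ⟨huw, Or.inl ?_⟩
          intro i h
          simp only [hw]
          rw [dif_pos h]
        exact ⟨SimpleGraph.Walk.cons hadj p, by simp; omega⟩

lemma overlap (d n : ℕ) {u v : Fin n → Fin d} (p : (deBruijnGraph d n).Walk u v) :
    ∃ pl qr : ℕ, pl + qr ≤ p.length ∧
      ∀ i : ℕ, (h : pl + qr + i < n) →
        v ⟨qr + i, by omega⟩ = u ⟨pl + i, by omega⟩ := by
  induction p with
  | nil =>
    refine ⟨0, 0, le_refl _, fun i h => rfl⟩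
  | @cons u w v hadj p ih =>
    obtain ⟨pl, qr, hsum, hagree⟩ := ih
    rcases hadj with ⟨hne, hL | hR⟩
    · refine ⟨pl + 1, qr, le_of_le_of_eq (by omega : pl + 1 + qr ≤ p.length + 1) (SimpleGraph.Walk.length_cons _ _).symm, fun i h => ?_⟩
      have h1 := hagree i (by omega)
      have h2 : u ⟨pl + i + 1, by omega⟩ = w ⟨pl + i, by omega⟩ :=
        hL ⟨pl + i, by omega⟩ (by simp only [Fin.val_mk]; omega)
      rw [h1, ← h2]
      exact congrArg u (fmk _ _ (by omega))
    · refine ⟨pl, qr + 1, le_of_le_of_eq (by omega : pl + (qr + 1) ≤ p.length + 1) (SimpleGraph.Walk.length_cons _ _).symm, fun i h => ?_⟩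
      have h1 := hagree (i + 1) (by omega)
      have h2 : w ⟨pl + i + 1, by omega⟩ = u ⟨pl + i, by omega⟩ :=
        hR ⟨pl + i, by omega⟩ (by simp only [Fin.val_mk]; omega)
      have e1 : (⟨qr + 1 + i, by omega⟩ : Fin n) = ⟨qr + (i + 1), by omega⟩ :=
        fmk _ _ (by omega)
      have e2 : (⟨pl + (i + 1), by omega⟩ : Fin n) = ⟨(pl + i) + 1, by omega⟩ :=
        fmk _ _ (by omega)
      rw [e1, h1, e2, h2]

set_option maxHeartbeats 2000000 in
theorem suffix_separation (d t n : ℕ) (hd : 3 ≤ d) (ht : 1 ≤ t) (hn : 2 * t ≤ n)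
    (x y : Fin n → Fin d)
    (hsuf : ∃ i : ℕ, ∃ hi : i < n - t, x ⟨t + i, by omega⟩ ≠ y ⟨t + i, by omega⟩) :
    (∃ a : Fin n → Fin d,
      (∀ i : ℕ, ∀ hi : i < n - t, a ⟨i, by omega⟩ = x ⟨t + i, by omega⟩) ∧
      (deBruijnGraph d n).dist x a ≤ t ∧
      t < (deBruijnGraph d n).dist y a) ∧
    ball (deBruijnGraph d n) t x ≠ ball (deBruijnGraph d n) t y := by
  choose f hf1 hf2 using (fun u v => avoid_exists hd u v)
  obtain ⟨a, hadef⟩ : ∃ a : Fin n → Fin d, a = fun (j : Fin n) =>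
      if h : (j : ℕ) < n - t then x ⟨t + (j : ℕ), by omega⟩
      else f (y ⟨2 * n - t - 2 - (j : ℕ), by have := j.isLt; omega⟩)
             (y ⟨2 * n - t - 1 - (j : ℕ), by have := j.isLt; omega⟩) := ⟨_, rfl⟩
  have hfix : ∀ i : ℕ, ∀ hi : i < n - t, a ⟨i, by omega⟩ = x ⟨t + i, by omega⟩ := by
    intro i hi
    simp only [hadef]
    rw [dif_pos (show ((⟨i, by omega⟩ : Fin n) : ℕ) < n - t from hi)]
  have htail : ∀ j : ℕ, ∀ h1 : j < n, ∀ h2 : ¬ (j < n - t),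
      a ⟨j, h1⟩ = f (y ⟨2 * n - t - 2 - j, by omega⟩) (y ⟨2 * n - t - 1 - j, by omega⟩) := by
    intro j h1 h2
    simp only [hadef]
    rw [dif_neg (show ¬ ((⟨j, h1⟩ : Fin n) : ℕ) < n - t from h2)]
  -- distance from x to a is at most t
  have hxa : (deBruijnGraph d n).dist x a ≤ t := by
    obtain ⟨p, hp⟩ := walk_of_shift d n t x a (fun i h1 h2 => hfix i (by omega))
    exact le_trans (SimpleGraph.dist_le p) hp
  -- reachability from y to a
  have hreach : (deBruijnGraph d n).Reachable y a := by
    obtain ⟨p, _⟩ := walk_of_shift d n n y a (fun i h1 h2 => absurd h2 (by omega))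
    exact ⟨p⟩
  -- distance from y to a exceeds t
  have hya : t < (deBruijnGraph d n).dist y a := by
    by_contra hle
    push_neg at hle
    obtain ⟨p, hplen⟩ := hreach.exists_walk_length_eq_dist
    obtain ⟨pl, qr, hsum, hagree⟩ := overlap d n p
    have hsum' : pl + qr ≤ t := by omega
    by_cases hm : pl = t ∧ qr = 0
    · obtain ⟨hpl, hqr⟩ := hm
      obtain ⟨i₀, hi₀, hxy⟩ := hsuf
      have h1 := hagree i₀ (by omega)
      have e1 : (⟨qr + i₀, by omega⟩ : Fin n) = ⟨i₀, by omega⟩ := fmk _ _ (by omega)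
      have e2 : (⟨pl + i₀, by omega⟩ : Fin n) = ⟨t + i₀, by omega⟩ := fmk _ _ (by omega)
      exact hxy ((hfix i₀ hi₀).symm.trans
        (((congrArg a e1).symm.trans h1).trans (congrArg y e2)))
    · obtain ⟨m, hmdef⟩ : ∃ m, m = t - pl + qr := ⟨_, rfl⟩
      have hm1 : 1 ≤ m := by
        rcases not_and_or.mp hm with h | h <;> omega
      obtain ⟨r, hrdef⟩ : ∃ r, r = (m + 1) / 2 := ⟨_, rfl⟩
      have hr1 : 1 ≤ r := by omega
      have hrt : r ≤ t := by omega
      have hrp : r ≤ t - pl := by omega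
      obtain ⟨j, hjdef⟩ : ∃ j, j = n - t + r - 1 := ⟨_, rfl⟩
      obtain ⟨i, hidef⟩ : ∃ i, i = j - qr := ⟨_, rfl⟩
      have hji : j = qr + i := by omega
      have h1 := hagree i (by omega)
      have e1 : (⟨qr + i, by omega⟩ : Fin n) = ⟨j, by omega⟩ := fmk _ _ (by omega)
      have h2 : a ⟨j, by omega⟩ = y ⟨pl + i, by omega⟩ :=
        (congrArg a e1).symm.trans h1
      have h3 := (htail j (by omega) (by omega)).symm.trans h2
      have hcase : m = 2 * r ∨ m = 2 * r - 1 := by omega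
      rcases hcase with hc | hc
      · have e2 : (⟨pl + i, by omega⟩ : Fin n) = ⟨2 * n - t - 2 - j, by omega⟩ :=
          fmk _ _ (by omega)
        exact hf1 _ _ (h3.trans (congrArg y e2))
      · have e2 : (⟨pl + i, by omega⟩ : Fin n) = ⟨2 * n - t - 1 - j, by omega⟩ :=
          fmk _ _ (by omega)
        exact hf2 _ _ (h3.trans (congrArg y e2))
  refine ⟨⟨a, hfix, hxa, hya⟩, fun hball => ?_⟩
  have h1 : a ∈ ball (deBruijnGraph d n) t x := hxa
  rw [hball] at h1
  have h2 : (deBruijnGraph d n).dist y a ≤ t := h1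
  omega
end

section
/- Let d ≥ 3 and n ≥ 2 be integers. For every vertex y of the undirected de Bruijn graph B(d,n) there exists a vertex x with d(y,x) = n. -/
/-!
A walk of length `k` from `y` to `x` leaves a block of `y` (shortened by `a` letters on the left
and `b` on the right) inside `x` at some shift `s`, with `2 (a + b) ≤ k + |s|`: every step either
moves the block by one place or, when it already touches an end, also loses a letter. Choosing
`x i ∉ {y (n - 1 - i), y (n - 2 - i)}` forbids every such block when `k < n`, because the block
then contains a position `j` with `2 j + s ∈ {n - 1, n - 2}`. Conversely, pushing the letters of
`x` into `y` one at a time reaches `x` in at most `n` steps.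
-/

open SimpleGraph

namespace deBruijnGraph

variable {d n : ℕ}

lemma exists_walk_length_le_of_shift {k : ℕ} (hk : k ≤ n) {u w : Fin n → Fin d}
    (h : ∀ i j : Fin n, (i : ℕ) = j + k → w i = u j) :
    ∃ p : (deBruijnGraph d n).Walk u w, p.length ≤ k := by
  induction k generalizing u with
  | zero =>
    obtain rfl : u = w := funext fun i => (h i i rfl).symm
    exact ⟨.nil, le_rfl⟩
  | succ k ih =>
    let v : Fin n → Fin d := fun i =>
      if hi : (i : ℕ) = 0 then w ⟨k, by omega⟩ else u ⟨i - 1, by omega⟩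
    have hvu : ∀ (i : Fin n) (hi : (i : ℕ) + 1 < n), v ⟨i + 1, hi⟩ = u i := fun i hi => by
      simp [v]
    obtain ⟨p, hp⟩ := ih (u := v) (by omega) fun i j hij => by
      by_cases hj : (j : ℕ) = 0
      · have hi : i = ⟨k, by omega⟩ := Fin.ext (by simp; omega)
        simp [v, hj, hi]
      · have hw := h i ⟨j - 1, by omega⟩ (by simp; omega)
        simp [v, hj, hw]
    by_cases huv : u = v
    · exact ⟨p.copy huv.symm rfl, by simp; omega⟩
    · exact ⟨.cons (show (deBruijnGraph d n).Adj u v from ⟨huv, .inr hvu⟩) p, by simp; omega⟩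

lemma exists_walk_length_le (u w : Fin n → Fin d) :
    ∃ p : (deBruijnGraph d n).Walk u w, p.length ≤ n :=
  exists_walk_length_le_of_shift le_rfl fun i j hij => absurd i.isLt (by omega)

def SharesBlock (k : ℕ) (u w : Fin n → Fin d) : Prop :=
  ∃ (a b : ℕ) (s : ℤ), -(a : ℤ) ≤ s ∧ s ≤ b ∧ 2 * ((a : ℤ) + b) ≤ k + |s| ∧
    ∀ i j : Fin n, a ≤ (j : ℕ) → (j : ℕ) + b < n → (i : ℤ) = j + s → w i = u j

lemma sharesBlock_refl (u : Fin n → Fin d) : SharesBlock 0 u u :=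
  ⟨0, 0, 0, by simp, by simp, by simp, fun i j _ _ hij => by rw [Fin.ext (by omega : (i : ℕ) = j)]⟩

lemma SharesBlock.of_adj {k : ℕ} {u' u w : Fin n → Fin d} (h : SharesBlock k u w)
    (hadj : (deBruijnGraph d n).Adj u' u) : SharesBlock (k + 1) u' w := by
  obtain ⟨a, b, s, hsa, hsb, hcost, hblock⟩ := h
  obtain ⟨-, hright | hleft⟩ := hadj
  · refine ⟨a + 1, b - 1, s - 1, by omega, by omega, by grind, fun i j hj₁ hj₂ hij => ?_⟩
    have hj : j = ⟨(j : ℕ) - 1 + 1, by omega⟩ := Fin.ext (by simp; omega)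
    rw [hj, hright ⟨j - 1, by omega⟩]
    exact hblock i _ (by simp; omega) (by simp; omega) (by simp; omega)
  · refine ⟨a - 1, b + 1, s + 1, by omega, by omega, by grind, fun i j hj₁ hj₂ hij => ?_⟩
    rw [← hleft j (by omega)]
    exact hblock i _ (by simp; omega) (by simp; omega) (by simp; omega)

lemma sharesBlock_of_walk {u w : Fin n → Fin d} (p : (deBruijnGraph d n).Walk u w) :
    SharesBlock p.length u w := by
  induction p with
  | nil => exact sharesBlock_refl _
  | cons hadj _ ih => exact ih.of_adj hadj

lemma le_of_sharesBlock {k : ℕ} {x y : Fin n → Fin d}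
    (hxy : ∀ i j : Fin n, ((i : ℕ) + j + 1 = n ∨ (i : ℕ) + j + 2 = n) → x i ≠ y j)
    (h : SharesBlock k y x) : n ≤ k := by
  by_contra! hk
  obtain ⟨a, b, s, hsa, hsb, hcost, hblock⟩ := h
  obtain ⟨i, j, hi, hj, hj₁, hj₂, hij, hsum⟩ : ∃ i j : ℕ, i < n ∧ j < n ∧ a ≤ j ∧ j + b < n ∧
      (i : ℤ) = j + s ∧ (i + j + 1 = n ∨ i + j + 2 = n) := by
    refine ⟨((n - 1 + s) / 2).toNat, ((n - 1 - s) / 2).toNat, ?_⟩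
    rcases abs_cases s with ⟨habs, _⟩ | ⟨habs, _⟩ <;> omega
  exact hxy ⟨i, hi⟩ ⟨j, hj⟩ hsum (hblock _ _ hj₁ hj₂ hij)

end deBruijnGraph

lemma exists_ne_antidiagonal {d n : ℕ} (hd : 3 ≤ d) (y : Fin n → Fin d) :
    ∃ x : Fin n → Fin d,
      ∀ i j : Fin n, ((i : ℕ) + j + 1 = n ∨ (i : ℕ) + j + 2 = n) → x i ≠ y j := by
  choose x hx using fun i : Fin n =>
    Fin.exists_ne_and_ne_of_two_lt (y ⟨n - 1 - i, by omega⟩) (y ⟨n - 2 - i, by omega⟩) (by omega)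
  refine ⟨x, fun i j hij => ?_⟩
  rcases hij with hij | hij
  · rw [show j = ⟨n - 1 - i, by omega⟩ from Fin.ext (by simp; omega)]
    exact (hx i).1
  · rw [show j = ⟨n - 2 - i, by omega⟩ from Fin.ext (by simp; omega)]
    exact (hx i).2

theorem exists_dist_n_general (d n : ℕ) (hd : 3 ≤ d) (y : Fin n → Fin d) :
    ∃ x : Fin n → Fin d, (deBruijnGraph d n).dist y x = n := by
  obtain ⟨x, hx⟩ := exists_ne_antidiagonal hd y
  obtain ⟨p, hp⟩ := deBruijnGraph.exists_walk_length_le y x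
  obtain ⟨q, hq⟩ := Reachable.exists_walk_length_eq_dist ⟨p⟩
  refine ⟨x, le_antisymm ((dist_le p).trans hp) ?_⟩
  exact hq ▸ deBruijnGraph.le_of_sharesBlock hx (deBruijnGraph.sharesBlock_of_walk q)

theorem exists_dist_n (d n : ℕ) (hd : 3 ≤ d) (hn : 2 ≤ n) (y : Fin n → Fin d) :
    ∃ x : Fin n → Fin d, (deBruijnGraph d n).dist y x = n :=
  exists_dist_n_general d n hd y
end

section
/- Let d ≥ 3 and n ≥ 2 be integers. Every vertex of the undirected de Bruijn graph B(d,n) has eccentricity exactly n; that is, for every vertex y, the maximum over all vertices x of the distance d(y,x) equals n. In particular, the radius of B(d,n) is n. -/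
lemma exists_ne_ne {d : ℕ} (hd : 3 ≤ d) (a b : Fin d) : ∃ c : Fin d, c ≠ a ∧ c ≠ b := by
  by_contra h
  push_neg at h
  have hsub : (Finset.univ : Finset (Fin d)) ⊆ {a, b} := by
    intro c _
    simp only [Finset.mem_insert, Finset.mem_singleton]
    by_cases hc : c = a
    · exact Or.inl hc
    · exact Or.inr (h c hc)
  have h1 := Finset.card_le_card hsub
  have h2 : ({a, b} : Finset (Fin d)).card ≤ 2 :=
    (Finset.card_insert_le _ _).trans (by simp)
  simp [Finset.card_univ] at h1
  omega

lemma window {d n : ℕ} :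
    ∀ {v y : Fin n → Fin d} (p : (deBruijnGraph d n).Walk v y),
    ∃ ℓ r : ℕ, ℓ + r ≤ p.length ∧
      ∀ e (he : ℓ + r + e < n),
        v ⟨r + e, by omega⟩ = y ⟨ℓ + e, by omega⟩ := by
  intro v y p
  induction p with
  | nil => exact ⟨0, 0, by simp, fun e he => rfl⟩
  | @cons a b c h q ih =>
    obtain ⟨ℓ, r, hlr, hw⟩ := ih
    rcases h.2 with h2 | h2
    · -- a ⟨i+1⟩ = b i
      refine ⟨ℓ, r + 1, by simp [SimpleGraph.Walk.length_cons]; omega, fun e he => ?_⟩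
      have h1 : r + e + 1 < n := by omega
      have hv : a ⟨r + e + 1, h1⟩ = b ⟨r + e, by omega⟩ := h2 ⟨r + e, by omega⟩ h1
      have hm : (⟨r + 1 + e, by omega⟩ : Fin n) = ⟨r + e + 1, h1⟩ := by
        ext; simp; omega
      rw [hm, hv]
      exact hw e (by omega)
    · -- b ⟨i+1⟩ = a i
      refine ⟨ℓ + 1, r, by simp [SimpleGraph.Walk.length_cons]; omega, fun e he => ?_⟩
      have h1 : r + e + 1 < n := by omega
      have hv : b ⟨r + e + 1, h1⟩ = a ⟨r + e, by omega⟩ := h2 ⟨r + e, by omega⟩ h1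
      have hu : b ⟨r + (e + 1), by omega⟩ = c ⟨ℓ + (e + 1), by omega⟩ := hw (e + 1) (by omega)
      have hm1 : (⟨r + e + 1, h1⟩ : Fin n) = ⟨r + (e + 1), by omega⟩ := by ext; simp; omega
      have hm2 : (⟨ℓ + 1 + e, by omega⟩ : Fin n) = ⟨ℓ + (e + 1), by omega⟩ := by ext; simp; omega
      calc a ⟨r + e, by omega⟩ = b ⟨r + e + 1, h1⟩ := hv.symm
        _ = b ⟨r + (e + 1), by omega⟩ := congrArg b hm1
        _ = c ⟨ℓ + (e + 1), by omega⟩ := hu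
        _ = c ⟨ℓ + 1 + e, by omega⟩ := (congrArg c hm2).symm

lemma exists_walk_le {d n : ℕ} (hn : 1 ≤ n) (y x : Fin n → Fin d) :
    ∃ p : (deBruijnGraph d n).Walk y x, p.length ≤ n := by
  set w : ℕ → Fin n → Fin d := fun k i =>
    if h : (i : ℕ) + k < n then y ⟨(i : ℕ) + k, h⟩
    else x ⟨((i : ℕ) + k) % n, Nat.mod_lt _ (by omega)⟩ with hwdef
  have key : ∀ k, ∀ i : Fin n, ∀ h : (i : ℕ) + 1 < n,
      w k ⟨(i : ℕ) + 1, h⟩ = w (k + 1) i := by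
    intro k i h
    simp only [hwdef]
    have : (i : ℕ) + 1 + k = (i : ℕ) + (k + 1) := by omega
    simp only [this]
  have hstep : ∀ k, w k = w (k + 1) ∨ (deBruijnGraph d n).Adj (w k) (w (k + 1)) := by
    intro k
    by_cases he : w k = w (k + 1)
    · exact Or.inl he
    · exact Or.inr ⟨he, Or.inl (key k)⟩
  have hwalk : ∀ m, ∃ p : (deBruijnGraph d n).Walk (w 0) (w m), p.length ≤ m := by
    intro m
    induction m with
    | zero => exact ⟨SimpleGraph.Walk.nil, by simp⟩
    | succ m ih =>
      obtain ⟨p, hp⟩ := ih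
      rcases hstep m with he | ha
      · exact ⟨p.copy rfl he, by simpa using hp.trans (by omega)⟩
      · exact ⟨p.concat ha, by rw [SimpleGraph.Walk.length_concat]; omega⟩
  have hw0 : w 0 = y := by
    funext i
    simp only [hwdef]
    rw [dif_pos (by omega : (i : ℕ) + 0 < n)]
    exact congrArg y (by ext; simp)
  have hwn : w n = x := by
    funext i
    simp only [hwdef]
    rw [dif_neg (by omega : ¬ ((i : ℕ) + n < n))]
    congr 1
    ext
    simp [Nat.add_mod_right, Nat.mod_eq_of_lt i.isLt]
  obtain ⟨p, hp⟩ := hwalk n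
  exact ⟨p.copy hw0 hwn, by simpa using hp⟩

lemma dist_le_n {d n : ℕ} (hn : 1 ≤ n) (y x : Fin n → Fin d) :
    (deBruijnGraph d n).dist y x ≤ n := by
  obtain ⟨p, hp⟩ := exists_walk_le hn y x
  exact (SimpleGraph.dist_le p).trans hp

set_option maxHeartbeats 2000000 in
theorem eccentricity_eq_n (d n : ℕ) (hd : 3 ≤ d) (hn : 2 ≤ n) :
    (∀ y : Fin n → Fin d,
      IsGreatest {m : ℕ | ∃ x : Fin n → Fin d, (deBruijnGraph d n).dist y x = m} n) ∧
    IsLeast {e : ℕ | ∃ y : Fin n → Fin d,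
      IsGreatest {m : ℕ | ∃ x : Fin n → Fin d, (deBruijnGraph d n).dist y x = m} e} n := by
  have hn1 : 1 ≤ n := by omega
  have key : ∀ y : Fin n → Fin d,
      IsGreatest {m : ℕ | ∃ x : Fin n → Fin d, (deBruijnGraph d n).dist y x = m} n := by
    intro y
    constructor
    · -- there exists x at distance exactly n
      have hex : ∀ i : Fin n, ∃ c : Fin d,
          c ≠ y ⟨n - 1 - (i : ℕ), by omega⟩ ∧ c ≠ y ⟨n - 2 - (i : ℕ), by omega⟩ :=
        fun i => exists_ne_ne hd _ _
      choose x hx1 hx2 using hex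
      refine ⟨x, le_antisymm (dist_le_n hn1 y x) ?_⟩
      by_contra hlt
      push_neg at hlt
      obtain ⟨p, _⟩ := exists_walk_le hn1 y x
      have hreach : (deBruijnGraph d n).Reachable y x := ⟨p⟩
      obtain ⟨q, hq⟩ := hreach.exists_walk_length_eq_dist
      obtain ⟨ℓ, r, hlr, hw⟩ := window q.reverse
      rw [SimpleGraph.Walk.length_reverse, hq] at hlr
      have hs : ℓ + r < n := by omega
      by_cases hpar : (n - 1 - (ℓ + r)) % 2 = 0
      · have h2e : 2 * ((n - 1 - (ℓ + r)) / 2) = n - 1 - (ℓ + r) := by omega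
        have hw' := hw ((n - 1 - (ℓ + r)) / 2) (by omega)
        have hne := hx1 ⟨r + (n - 1 - (ℓ + r)) / 2, by omega⟩
        exact hne (hw'.trans (congrArg y (by ext; simp; omega)))
      · have hle : ℓ + r ≤ n - 2 := by omega
        have h2e : 2 * ((n - 2 - (ℓ + r)) / 2) = n - 2 - (ℓ + r) := by omega
        have hw' := hw ((n - 2 - (ℓ + r)) / 2) (by omega)
        have hne := hx2 ⟨r + (n - 2 - (ℓ + r)) / 2, by omega⟩
        exact hne (hw'.trans (congrArg y (by ext; simp; omega)))
    · rintro m ⟨x, rfl⟩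
      exact dist_le_n hn1 y x
  refine ⟨key, ⟨⟨fun _ => ⟨0, by omega⟩, key _⟩, ?_⟩⟩
  rintro e ⟨y, hy⟩
  exact hy.2 (key y).1
end

section
/- For all integers d ≥ 3, t ≥ 1, and n ≥ 2t, any two distinct vertices x, y of the undirected de Bruijn graph B(d,n) satisfy B_t(x) ≠ B_t(y); that is, B(d,n) contains no t-twins. -/
namespace DeBruijn

open Finset
open SimpleGraph (Walk dist_le)

section ShiftEq

variable {α : Type*} {n : ℕ}

/-- The factor of `x` starting at position `a` equals the factor of `z` starting at position `b`,
both of length `n - a - b`. -/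
def ShiftEq (x z : Fin n → α) (a b : ℕ) : Prop :=
  ∀ j (h : j + a + b < n), x ⟨j + a, by omega⟩ = z ⟨j + b, by omega⟩

theorem ShiftEq.refl (x : Fin n → α) (c : ℕ) : ShiftEq x x c c := fun _ _ => rfl

theorem ShiftEq.symm {x z : Fin n → α} {a b : ℕ} (h : ShiftEq x z a b) : ShiftEq z x b a :=
  fun j hj => (h j (by omega)).symm

theorem ShiftEq.trans {x u z : Fin n → α} {a b a' b' : ℕ} (h : ShiftEq x u a b)
    (h' : ShiftEq u z a' b') : ShiftEq x z (a + a') (b + b') := by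
  intro j hj
  have e := h (j + a') (by omega)
  have e' := h' (j + b) (by omega)
  simp only [Nat.add_comm, Nat.add_left_comm] at e e' ⊢
  exact e.trans e'

theorem ShiftEq.comp_rev {x z : Fin n → α} {a b : ℕ} (h : ShiftEq x z a b) :
    ShiftEq (x ∘ Fin.rev) (z ∘ Fin.rev) b a := by
  intro j hj
  have e := h (n - 1 - j - a - b) (by omega)
  simp only [Function.comp_apply]
  convert e using 2 <;> ext <;> simp only [Fin.val_rev] <;> omega

end ShiftEq

variable {d n : ℕ}

theorem deBruijnGraph_adj_iff {x y : Fin n → Fin d} :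
    (deBruijnGraph d n).Adj x y ↔ x ≠ y ∧ (ShiftEq x y 1 0 ∨ ShiftEq x y 0 1) := by
  have shift_iff : ∀ u v : Fin n → Fin d,
      (∀ i : Fin n, ∀ h : (i : ℕ) + 1 < n, u ⟨i + 1, h⟩ = v i) ↔ ShiftEq u v 1 0 :=
    fun u v => ⟨fun h j hj => h ⟨j, by omega⟩ hj, fun h i hi => h i hi⟩
  change _ ∧ _ ↔ _
  rw [shift_iff, shift_iff]
  exact and_congr_right fun _ => or_congr_right ⟨ShiftEq.symm, ShiftEq.symm⟩

theorem exists_shiftEq_of_walk {x z : Fin n → Fin d} (p : (deBruijnGraph d n).Walk x z) :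
    ∃ a b, a + b ≤ p.length ∧ ShiftEq x z a b := by
  induction p with
  | nil => exact ⟨0, 0, le_rfl, ShiftEq.refl _ 0⟩
  | cons hadj _ ih =>
    obtain ⟨a, b, hab, h⟩ := ih
    rw [Walk.length_cons]
    rcases (deBruijnGraph_adj_iff.1 hadj).2 with hstep | hstep
    · exact ⟨1 + a, 0 + b, by omega, hstep.trans h⟩
    · exact ⟨0 + a, 1 + b, by omega, hstep.trans h⟩

theorem exists_walk_of_shiftEq {x : Fin n → Fin d} :
    ∀ {k : ℕ} {z : Fin n → Fin d}, ShiftEq x z k 0 →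
      ∃ p : (deBruijnGraph d n).Walk x z, p.length ≤ k
  | 0, z, h => by
    have : x = z := funext fun i => h i (by omega)
    exact ⟨Walk.nil.copy rfl this, by simp⟩
  | k + 1, z, h => by
    let u : Fin n → Fin d := fun i =>
      if hi : (i : ℕ) + k < n then x ⟨i + k, hi⟩ else z ⟨i - 1, by omega⟩
    have hxu : ShiftEq x u k 0 := fun j hj => by
      simp [u, show j + k < n by omega]
    have huz : ShiftEq u z 1 0 := by
      intro j hj
      by_cases hjk : j + 1 + k < n
      · simp only [u, dif_pos hjk]
        simpa only [Nat.add_right_comm j 1 k, Nat.add_assoc] using h j (by omega)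
      · simp only [u, dif_neg hjk]
        rfl
    obtain ⟨p, hp⟩ := exists_walk_of_shiftEq hxu
    by_cases huz' : u = z
    · exact ⟨p.copy rfl huz', by rw [Walk.length_copy]; omega⟩
    · exact ⟨p.concat (deBruijnGraph_adj_iff.2 ⟨huz', Or.inl huz⟩),
        by rw [Walk.length_concat]; omega⟩

theorem deBruijnGraph_preconnected : (deBruijnGraph d n).Preconnected := fun x z =>
  (exists_walk_of_shiftEq (k := n) (fun j hj => by omega)).elim fun p _ => p.reachable

theorem dist_le_of_shiftEq {x z : Fin n → Fin d} {k : ℕ} (h : ShiftEq x z k 0) :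
    (deBruijnGraph d n).dist x z ≤ k :=
  let ⟨p, hp⟩ := exists_walk_of_shiftEq h
  (dist_le p).trans hp

theorem exists_shiftEq_of_dist_le {x z : Fin n → Fin d} {t : ℕ}
    (h : (deBruijnGraph d n).dist x z ≤ t) : ∃ a b, a + b ≤ t ∧ ShiftEq x z a b := by
  obtain ⟨p, hp⟩ := (deBruijnGraph_preconnected x z).exists_walk_length_eq_dist
  obtain ⟨a, b, hab, hxz⟩ := exists_shiftEq_of_walk p
  exact ⟨a, b, by omega, hxz⟩

theorem comp_rev_comp_rev {α : Type*} (x : Fin n → α) : (x ∘ Fin.rev) ∘ Fin.rev = x :=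
  funext fun i => congrArg x (Fin.rev_rev i)

theorem adj_comp_rev {x y : Fin n → Fin d} (h : (deBruijnGraph d n).Adj x y) :
    (deBruijnGraph d n).Adj (x ∘ Fin.rev) (y ∘ Fin.rev) := by
  obtain ⟨hne, hstep⟩ := deBruijnGraph_adj_iff.1 h
  refine deBruijnGraph_adj_iff.2
    ⟨fun he => hne ?_, hstep.symm.imp ShiftEq.comp_rev ShiftEq.comp_rev⟩
  simpa only [comp_rev_comp_rev] using congrArg (· ∘ Fin.rev) he

def revHom : deBruijnGraph d n →g deBruijnGraph d n := ⟨(· ∘ Fin.rev), adj_comp_rev⟩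

theorem dist_comp_rev_le (x y : Fin n → Fin d) :
    (deBruijnGraph d n).dist (x ∘ Fin.rev) (y ∘ Fin.rev) ≤ (deBruijnGraph d n).dist x y := by
  obtain ⟨p, hp⟩ := (deBruijnGraph_preconnected x y).exists_walk_length_eq_dist
  calc _ ≤ (p.map revHom).length := dist_le _
    _ = _ := by rw [Walk.length_map, hp]

theorem dist_comp_rev (x y : Fin n → Fin d) :
    (deBruijnGraph d n).dist (x ∘ Fin.rev) (y ∘ Fin.rev) = (deBruijnGraph d n).dist x y :=
  (dist_comp_rev_le x y).antisymm <| by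
    simpa only [comp_rev_comp_rev] using dist_comp_rev_le (x ∘ Fin.rev) (y ∘ Fin.rev)

theorem ball_comp_rev (t : ℕ) (x : Fin n → Fin d) :
    ball (deBruijnGraph d n) t (x ∘ Fin.rev) = (· ∘ Fin.rev) ⁻¹' ball (deBruijnGraph d n) t x := by
  ext z
  change _ ≤ t ↔ _ ≤ t
  rw [← dist_comp_rev, comp_rev_comp_rev]

section Counting

variable {α : Type*} {t : ℕ}

def shiftIn (x : Fin n → α) (w : Fin t → α) : Fin n → α := fun i =>
  if h : (i : ℕ) + t < n then x ⟨i + t, h⟩ else w ⟨i + t - n, by omega⟩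

theorem shiftEq_shiftIn (x : Fin n → α) (w : Fin t → α) : ShiftEq x (shiftIn x w) t 0 :=
  fun j hj => by simp [shiftIn, show j + t < n by omega]

theorem card_le_pow_of_eqOn_lt [Fintype α] {S : Finset (Fin t → α)} {m : ℕ}
    (h : ∀ w ∈ S, ∀ w' ∈ S, ∀ i : Fin t, (i : ℕ) < m → w i = w' i) :
    #S ≤ Fintype.card α ^ (t - m) := by
  classical
  calc #S ≤ #(univ : Finset (Fin (t - m) → α)) := by
        refine card_le_card_of_injOn (fun w j => w ⟨m + j, by omega⟩) (fun _ _ => mem_univ _) ?_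
        intro w hw w' hw' hww'
        funext i
        by_cases hi : (i : ℕ) < m
        · exact h w hw w' hw' i hi
        · simpa [show m + (i - m) = i by omega] using congrFun hww' ⟨i - m, by omega⟩
    _ = Fintype.card α ^ (t - m) := by simp

open Classical in
theorem card_shiftEq_shiftIn_le [Fintype α] (x y : Fin n → α) {a b : ℕ} (hab : a + b ≤ t)
    (hn : t + b ≤ n) :
    #{w : Fin t → α | ShiftEq y (shiftIn x w) a b} ≤ Fintype.card α ^ a := by
  have hdet : ∀ w : Fin t → α, ShiftEq y (shiftIn x w) a b →
      ∀ i : Fin t, (hi : (i : ℕ) < t - a) → w i = y ⟨n - t - b + i + a, by omega⟩ := by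
    intro w hw i hi
    rw [hw (n - t - b + i) (by omega)]
    simp [shiftIn, show ¬(n - t - b + i + b + t < n) by omega,
      show n - t - b + i + b + t - n = i by omega]
  have := card_le_pow_of_eqOn_lt (S := {w : Fin t → α | ShiftEq y (shiftIn x w) a b}) (m := t - a)
    fun w hw w' hw' i hi => by
      rw [hdet w (mem_filter.1 hw).2 i hi, hdet w' (mem_filter.1 hw').2 i hi]
  rwa [show t - (t - a) = a by omega] at this

end Counting

theorem sum_range_two_mul_pow_lt {d : ℕ} (hd : 3 ≤ d) (t : ℕ) :
    ∑ i ∈ range t, 2 * d ^ i < d ^ t := by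
  induction t with
  | zero => simp
  | succ t ih =>
    rw [sum_range_succ, pow_succ]
    have := Nat.mul_le_mul_left (d ^ t) hd
    omega

theorem exists_shiftEq_shiftIn_of_ball_eq {t : ℕ} {x y : Fin n → Fin d}
    (hball : ball (deBruijnGraph d n) t x = ball (deBruijnGraph d n) t y) {k : Fin n}
    (hk : t ≤ k) (hxy : x k ≠ y k) (w : Fin t → Fin d) :
    ∃ a < t, ShiftEq y (shiftIn x w) a (t - a) ∨ ShiftEq y (shiftIn x w) a (t - 1 - a) := by
  have hw : shiftIn x w ∈ ball (deBruijnGraph d n) t y :=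
    hball ▸ dist_le_of_shiftEq (shiftEq_shiftIn x w)
  obtain ⟨a, b, hab, hyw⟩ := exists_shiftEq_of_dist_le hw
  have ha : a ≠ t := by
    rintro rfl
    obtain rfl : b = 0 := by omega
    have hx := shiftEq_shiftIn x w (k - a) (by omega)
    have hy := hyw (k - a) (by omega)
    simp only [Nat.sub_add_cancel hk] at hx hy
    exact hxy (hx.trans hy.symm)
  have hyw' := hyw.trans (ShiftEq.refl _ ((t - a - b) / 2))
  refine ⟨a + (t - a - b) / 2, by omega, ?_⟩
  by_cases hpar : (t - a - b) % 2 = 0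
  · left; convert hyw' using 2; omega
  · right; convert hyw' using 2; omega

open Classical in
theorem ball_ne_ball_of_apply_ne (hd : 3 ≤ d) {t : ℕ} (hn : 2 * t ≤ n) {x y : Fin n → Fin d}
    {k : Fin n} (hk : t ≤ k) (hxy : x k ≠ y k) :
    ball (deBruijnGraph d n) t x ≠ ball (deBruijnGraph d n) t y := by
  intro hball
  let S : ℕ → ℕ → Finset (Fin t → Fin d) := fun a b => {w | ShiftEq y (shiftIn x w) a b}
  have hcover : univ ⊆ (range t).biUnion fun a => S a (t - a) ∪ S a (t - 1 - a) := by
    intro w _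
    obtain ⟨a, ha, hw⟩ := exists_shiftEq_shiftIn_of_ball_eq hball hk hxy w
    simpa [S, ha] using ⟨a, ha, hw⟩
  have hcard : ∀ a < t, #(S a (t - a) ∪ S a (t - 1 - a)) ≤ 2 * d ^ a := by
    intro a ha
    have h₁ := card_shiftEq_shiftIn_le x y (t := t) (a := a) (b := t - a) (by omega) (by omega)
    have h₂ := card_shiftEq_shiftIn_le x y (t := t) (a := a) (b := t - 1 - a) (by omega) (by omega)
    simp only [Fintype.card_fin] at h₁ h₂
    exact (card_union_le _ _).trans ((add_le_add h₁ h₂).trans_eq (two_mul _).symm)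
  refine lt_irrefl (d ^ t) ?_
  calc d ^ t = #(univ : Finset (Fin t → Fin d)) := by simp
    _ ≤ #((range t).biUnion fun a => S a (t - a) ∪ S a (t - 1 - a)) := card_le_card hcover
    _ ≤ ∑ a ∈ range t, #(S a (t - a) ∪ S a (t - 1 - a)) := card_biUnion_le
    _ ≤ ∑ a ∈ range t, 2 * d ^ a := sum_le_sum fun a ha => hcard a (mem_range.1 ha)
    _ < d ^ t := sum_range_two_mul_pow_lt hd t

end DeBruijn

theorem deBruijn_no_twins_general (d t n : ℕ) (hd : 3 ≤ d) (hn : 2 * t ≤ n)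
    (x y : Fin n → Fin d) (hxy : x ≠ y) :
    ball (deBruijnGraph d n) t x ≠ ball (deBruijnGraph d n) t y := by
  obtain ⟨k, hk⟩ := Function.ne_iff.1 hxy
  rcases le_or_gt t k with htk | htk
  · exact DeBruijn.ball_ne_ball_of_apply_ne hd hn htk hk
  · intro hball
    refine DeBruijn.ball_ne_ball_of_apply_ne hd hn (x := x ∘ Fin.rev) (y := y ∘ Fin.rev)
      (k := k.rev) (by rw [Fin.val_rev]; omega) (by simpa using hk) ?_
    rw [DeBruijn.ball_comp_rev, DeBruijn.ball_comp_rev, hball]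

theorem deBruijn_no_twins (d t n : ℕ) (hd : 3 ≤ d) (ht : 1 ≤ t) (hn : 2 * t ≤ n)
    (x y : Fin n → Fin d) (hxy : x ≠ y) :
    ball (deBruijnGraph d n) t x ≠ ball (deBruijnGraph d n) t y :=
  deBruijn_no_twins_general d t n hd hn x y hxy
end

section
/- For every integer n ≥ 3, any two distinct vertices x, y of the undirected binary de Bruijn graph B(2,n) satisfy B_1(x) ≠ B_1(y); that is, B(2,n) contains no 1-twins. -/
namespace DBaux

variable {n : ℕ}

def shift0 (n : ℕ) (x : Fin n → Fin 2) : Fin n → Fin 2 :=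
  fun i => if h : (i : ℕ) + 1 < n then x ⟨(i : ℕ) + 1, h⟩ else 0

lemma reach_shift0 (x : Fin n → Fin 2) :
    (deBruijnGraph 2 n).Reachable x (shift0 n x) := by
  by_cases hx : x = shift0 n x
  · rw [← hx]
  · exact SimpleGraph.Adj.reachable ⟨hx, Or.inl fun i h => by simp only [shift0, dif_pos h]⟩

lemma shift0_iterate (k : ℕ) (x : Fin n → Fin 2) (i : Fin n) :
    (shift0 n)^[k] x i = if h : (i : ℕ) + k < n then x ⟨(i : ℕ) + k, h⟩ else 0 := by
  induction k generalizing x with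
  | zero => simp
  | succ k ih =>
    rw [Function.iterate_succ_apply, ih (shift0 n x)]
    unfold shift0
    simp only [Fin.val_mk]
    split_ifs with h1 h2 h3 h3 <;> try rfl
    · congr 1; exact Fin.ext (by omega)
    · omega
    · omega

lemma reach_zero (x : Fin n → Fin 2) :
    (deBruijnGraph 2 n).Reachable x (fun _ => 0) := by
  have key : ∀ k, (deBruijnGraph 2 n).Reachable x ((shift0 n)^[k] x) := by
    intro k
    induction k with
    | zero => exact SimpleGraph.Reachable.refl x
    | succ k ih =>
      rw [Function.iterate_succ_apply']
      exact ih.trans (reach_shift0 _)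
  have hz : (shift0 n)^[n] x = fun _ => 0 := by
    funext i
    rw [shift0_iterate]
    rw [dif_neg (by omega)]
  rw [← hz]; exact key n

lemma preconn : (deBruijnGraph 2 n).Preconnected := fun x y =>
  (reach_zero x).trans (reach_zero y).symm

lemma mem_ball_iff (x w : Fin n → Fin 2) :
    w ∈ ball (deBruijnGraph 2 n) 1 x ↔ w = x ∨ (deBruijnGraph 2 n).Adj x w := by
  constructor
  · intro h
    have h1 : (deBruijnGraph 2 n).dist x w ≤ 1 := h
    interval_cases hd : (deBruijnGraph 2 n).dist x w
    · left
      exact ((preconn x w).dist_eq_zero_iff.mp hd).symm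
    · right
      exact SimpleGraph.dist_eq_one_iff_adj.mp hd
  · rintro (rfl | hadj)
    · show (deBruijnGraph 2 n).dist w w ≤ 1
      simp [SimpleGraph.dist_self]
    · show (deBruijnGraph 2 n).dist x w ≤ 1
      exact le_of_eq (SimpleGraph.dist_eq_one_iff_adj.mpr hadj)

end DBaux
namespace DBaux

def lsh (n : ℕ) (y : Fin n → Fin 2) (c : Fin 2) : Fin n → Fin 2 :=
  fun i => if h : (i : ℕ) + 1 < n then y ⟨(i : ℕ) + 1, h⟩ else c

def rsh (n : ℕ) (x : Fin n → Fin 2) (k : Fin 2) : Fin n → Fin 2 :=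
  fun i => if h : 1 ≤ (i : ℕ) then x ⟨(i : ℕ) - 1, by omega⟩ else k

/-- ℕ-indexed version of a string. -/
def vf {n : ℕ} (x : Fin n → Fin 2) : ℕ → Fin 2 :=
  fun m => if h : m < n then x ⟨m, h⟩ else 0

lemma vf_eq {n : ℕ} (x : Fin n → Fin 2) (m : ℕ) (h : m < n) :
    vf x m = x ⟨m, h⟩ := dif_pos h

lemma vf_ext {n : ℕ} (x y : Fin n → Fin 2)
    (H : ∀ m, m < n → vf x m = vf y m) : x = y := by
  funext i
  have := H i.val i.isLt
  rwa [vf_eq x _ i.isLt, vf_eq y _ i.isLt] at this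

lemma vf_ne {n : ℕ} (x y : Fin n → Fin 2) (m : ℕ) (hm : m < n)
    (H : vf x m ≠ vf y m) : x ≠ y := fun h => H (by rw [h])

lemma shift_iff {n : ℕ} (u v : Fin n → Fin 2) :
    (∀ i : Fin n, ∀ h : (i : ℕ) + 1 < n, u ⟨(i : ℕ) + 1, h⟩ = v i) ↔
    (∀ m, m + 1 < n → vf u (m + 1) = vf v m) := by
  constructor
  · intro H m h
    rw [vf_eq u _ h, vf_eq v _ (by omega)]
    exact H ⟨m, by omega⟩ h
  · intro H i h
    have := H i.val h
    rwa [vf_eq u _ h, vf_eq v _ (by omega), Fin.eta] at this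

lemma vf_lsh {n : ℕ} (y : Fin n → Fin 2) (c : Fin 2) (m : ℕ) (hm : m < n) :
    vf (lsh n y c) m = if m + 1 < n then vf y (m + 1) else c := by
  rw [vf_eq _ _ hm]
  show (if h : m + 1 < n then y ⟨m + 1, h⟩ else c) = _
  split_ifs with h
  · rw [vf_eq y _ h]
  · rfl

lemma vf_rsh {n : ℕ} (x : Fin n → Fin 2) (k : Fin 2) (m : ℕ) (hm : m < n) :
    vf (rsh n x k) m = if 1 ≤ m then vf x (m - 1) else k := by
  rw [vf_eq _ _ hm]
  show (if h : 1 ≤ m then x ⟨m - 1, by omega⟩ else k) = _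
  split_ifs with h
  · rw [vf_eq x _ (by omega)]
  · rfl

lemma no_twins_aux (n : ℕ) (hn : 3 ≤ n) (x y : Fin n → Fin 2) (hxy : x ≠ y)
    (hsh : ∀ i : Fin n, ∀ h : (i : ℕ) + 1 < n, x ⟨(i : ℕ) + 1, h⟩ = y i)
    (hb : ball (deBruijnGraph 2 n) 1 x = ball (deBruijnGraph 2 n) 1 y) : False := by
  have hshN : ∀ m, m + 1 < n → vf x (m + 1) = vf y m := (shift_iff x y).mp hsh
  -- the two left-shifts of y are in ball y hence in ball x
  have zmem : ∀ c : Fin 2, lsh n y c ∈ ball (deBruijnGraph 2 n) 1 x := by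
    intro c
    rw [hb, mem_ball_iff]
    by_cases heq : lsh n y c = y
    · exact Or.inl heq
    · refine Or.inr ⟨fun h => heq h.symm, Or.inl ?_⟩
      rw [shift_iff]
      intro m h
      rw [vf_lsh y c m (by omega), if_pos h]
  have get3 : ∀ c : Fin 2, (lsh n y c = x) ∨
      (∀ m, m + 1 < n → vf x (m + 1) = vf (lsh n y c) m) ∨
      (∀ m, m + 1 < n → vf (lsh n y c) (m + 1) = vf x m) := by
    intro c
    rcases (mem_ball_iff x (lsh n y c)).mp (zmem c) with heq | ⟨_, hadj | hadj⟩
    · exact Or.inl heq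
    · exact Or.inr (Or.inl ((shift_iff _ _).mp hadj))
    · exact Or.inr (Or.inr ((shift_iff _ _).mp hadj))
  -- Case A : z c is a left-shift of x, for some c
  have caseA : ∀ c : Fin 2,
      (∀ m, m + 1 < n → vf x (m + 1) = vf (lsh n y c) m) → False := by
    intro c hA
    -- x and y agree on positions 1..n-1
    have hagree : ∀ m, 1 ≤ m → m < n → vf x m = vf y m := by
      intro m h1 h2
      have := hA (m - 1) (by omega)
      rw [vf_lsh y c (m - 1) (by omega), if_pos (by omega),
        show m - 1 + 1 = m by omega] at this
      exact this
    -- everything from position 1 on is constant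
    have step : ∀ m, 1 ≤ m → m + 1 < n → vf x (m + 1) = vf x m := by
      intro m h1 h2
      rw [hshN m h2, ← hagree m h1 (by omega)]
    have hk : ∀ m, 1 ≤ m → m < n → vf x m = vf x 1 := by
      intro m
      induction m with
      | zero => omega
      | succ m ih =>
        intro h1 h2
        by_cases hm0 : 1 ≤ m
        · rw [step m hm0 h2, ih hm0 (by omega)]
        · have : m = 0 := by omega
          subst this
          rfl
    set k : Fin 2 := vf x 1 with hkdef
    -- y is constant k
    have hy : ∀ m, m < n → vf y m = k := by
      intro m hm
      by_cases hm1 : m + 1 < n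
      · rw [← hshN m hm1]
        exact hk (m + 1) (by omega) hm1
      · have hm' : m = n - 1 := by omega
        subst hm'
        rw [← hagree (n - 1) (by omega) (by omega)]
        exact hk (n - 1) (by omega) (by omega)
    have hx0 : vf x 0 ≠ k := by
      intro hx0
      apply hxy
      apply vf_ext
      intro m hm
      by_cases hm1 : 1 ≤ m
      · rw [hk m hm1 hm, hy m hm, hkdef]
      · have : m = 0 := by omega
        subst this
        rw [hx0, hy 0 (by omega)]
    -- separating vertex: right shift of x with leading k
    set w : Fin n → Fin 2 := rsh n x k with hw
    have hw1 : vf w 1 = vf x 0 := by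
      rw [hw, vf_rsh x k 1 (by omega), if_pos (by omega)]
    have hw0 : vf w 0 = k := by
      rw [hw, vf_rsh x k 0 (by omega), if_neg (by omega)]
    have hwx : w ∈ ball (deBruijnGraph 2 n) 1 x := by
      rw [mem_ball_iff]
      refine Or.inr ⟨?_, Or.inr ?_⟩
      · refine (vf_ne w x 0 (by omega) ?_).symm
        rw [hw0]
        exact fun h => hx0 h.symm
      · rw [shift_iff]
        intro m hm
        rw [hw, vf_rsh x k (m + 1) (by omega), if_pos (by omega)]
        norm_num
    rw [hb, mem_ball_iff] at hwx
    rcases hwx with heq | ⟨_, hd | hd⟩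
    · apply hx0
      rw [← hw1, heq, hy 1 (by omega)]
    · rw [shift_iff] at hd
      have := hd 1 (by omega)
      rw 
        [hw1, hy 2 (by omega)] at this
      exact hx0 this.symm
    · rw [shift_iff] at hd
      have := hd 0 (by omega)
      rw [hw1] at this
      exact hx0 (this.trans (hy 0 (by omega)))
  -- facts extracted from "z c = x"
  have fromBeq : ∀ c : Fin 2, lsh n y c = x →
      vf x (n - 1) = c ∧ vf x (n - 3) = vf x (n - 1) ∧ vf x (n - 2) = vf y (n - 1) := by
    intro c hz
    have hcf : ∀ m, m < n → vf (lsh n y c) m = vf x m := fun m hm => by rw [hz]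
    have e1 : vf x (n - 1) = c := by
      have := hcf (n - 1) (by omega)
      rw [vf_lsh y c (n - 1) (by omega), if_neg (by omega)] at this
      exact this.symm
    have hxy2 : vf x (n - 1) = vf y (n - 2) := by
      have := hshN (n - 2) (by omega)
      rwa [show n - 2 + 1 = n - 1 by omega] at this
    have e2 : vf x (n - 3) = vf x (n - 1) := by
      have := hcf (n - 3) (by omega)
      rw [vf_lsh y c (n - 3) (by omega), if_pos (by omega),
        show n - 3 + 1 = n - 2 by omega, ← hxy2] at this
      exact this.symm
    have e3 : vf x (n - 2) = vf y (n - 1) := by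
      have := hcf (n - 2) (by omega)
      rw [vf_lsh y c (n - 2) (by omega), if_pos (by omega),
        show n - 2 + 1 = n - 1 by omega] at this
      exact this.symm
    exact ⟨e1, e2, e3⟩
  -- facts extracted from "z c right-shift related to x"
  have fromC : ∀ c : Fin 2,
      (∀ m, m + 1 < n → vf (lsh n y c) (m + 1) = vf x m) →
      c = vf x (n - 2) ∧ vf y (n - 1) = vf x (n - 3) := by
    intro c hc
    have f1 : c = vf x (n - 2) := by
      have := hc (n - 2) (by omega)
      rwa [show n - 2 + 1 = n - 1 by omega, vf_lsh y c (n - 1) (by omega),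
        if_neg (by omega)] at this
    have f2 : vf y (n - 1) = vf x (n - 3) := by
      have := hc (n - 3) (by omega)
      rwa [show n - 3 + 1 = n - 2 by omega, vf_lsh y c (n - 2) (by omega),
        if_pos (by omega), show n - 2 + 1 = n - 1 by omega] at this
    exact ⟨f1, f2⟩
  -- put it together
  rcases get3 0 with h0 | h0 | h0
  · rcases get3 1 with h1 | h1 | h1
    · have e0 := (fromBeq 0 h0).1
      have e1 := (fromBeq 1 h1).1
      rw [e0] at e1
      exact absurd e1 (by decide)
    · exact caseA 1 h1
    · obtain ⟨e1, e2, e3⟩ := fromBeq 0 h0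
      obtain ⟨f1, f2⟩ := fromC 1 h1
      have : (1 : Fin 2) = 0 := by rw [f1, e3, f2, e2, e1]
      exact absurd this (by decide)
  · exact caseA 0 h0
  · rcases get3 1 with h1 | h1 | h1
    · obtain ⟨e1, e2, e3⟩ := fromBeq 1 h1
      obtain ⟨f1, f2⟩ := fromC 0 h0
      have : (0 : Fin 2) = 1 := by rw [f1, e3, f2, e2, e1]
      exact absurd this (by decide)
    · exact caseA 1 h1
    · have f0 := (fromC 0 h0).1
      have f1 := (fromC 1 h1).1
      rw [← f0] at f1
      exact absurd f1 (by decide)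

end DBaux

theorem binary_deBruijn_no_twins (n : ℕ) (hn : 3 ≤ n)
    (x y : Fin n → Fin 2) (hxy : x ≠ y) :
    ball (deBruijnGraph 2 n) 1 x ≠ ball (deBruijnGraph 2 n) 1 y := by
  intro hb
  have hyy : y ∈ ball (deBruijnGraph 2 n) 1 y := by
    show (deBruijnGraph 2 n).dist y y ≤ 1
    simp [SimpleGraph.dist_self]
  rw [← hb, DBaux.mem_ball_iff] at hyy
  rcases hyy with heq | ⟨_, h1 | h1⟩
  · exact hxy heq.symm
  · exact DBaux.no_twins_aux n hn x y hxy h1 hb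
  · exact DBaux.no_twins_aux n hn y x (fun h => hxy h.symm) h1 hb.symm
end
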